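/- arXiv:1902.04197 — 5 statements merged into one kernel-verified Lean document; each statement's English description precedes it below -/
import Mathlib

section
/- Let γ₁,…,γ_N: [0,∞) → ℝ be sticky particle trajectories for distinct initial positions x₁,…,x_N, masses m₁,…,m_N > 0 with Σᵢ mᵢ = 1, initial velocities v₁,…,v_N, and potential W with semiconvexity constant c > 0, and assume the energy is nonincreasing: for all 0 ≤ s < t, ½ Σᵢ mᵢ γ̇ᵢ(t+)² + ½ Σ_{i,j} mᵢ mⱼ W(γᵢ(t) − γⱼ(t)) ≤ ½ Σᵢ mᵢ γ̇ᵢ(s+)² + ½ Σ_{i,j} mᵢ mⱼ W(γᵢ(s) − γⱼ(s)). Set ϑ(t) := e^{(c+1)t²} ∫₀ᵗ e^{−(c+1)s²} ds. Then for each t ≥ 0, ∫₀ᵗ Σᵢ mᵢ γ̇ᵢ(s)² ds ≤ (Σᵢ mᵢ vᵢ² + ½ Σ_{i,j} mᵢ mⱼ W'(xᵢ − xⱼ)²) ϑ(t), and for all but finitely many t ≥ 0, Σᵢ mᵢ γ̇ᵢ(t)² ≤ (Σᵢ mᵢ vᵢ² + ½ Σ_{i,j} mᵢ mⱼ W'(xᵢ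 − xⱼ)²) ϑ'(t). -/
open MeasureTheory Real Filter Set Topology

noncomputable section


lemma mono_of_finset_exceptions (F : Finset ℝ) :
    ∀ {a b : ℝ} {φ φ' : ℝ → ℝ}, a ≤ b → ContinuousOn φ (Icc a b) →
    (∀ t ∈ Ioo a b, t ∉ F → HasDerivAt φ (φ' t) t) →
    (∀ t ∈ Ioo a b, t ∉ F → 0 ≤ φ' t) → φ a ≤ φ b := by
  induction F using Finset.induction_on with
  | empty =>
    intro a b φ φ' hab hc hd hp
    have hm : MonotoneOn φ (Icc a b) := by
      apply monotoneOn_of_deriv_nonneg (convex_Icc a b) hc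
      · intro t ht
        rw [interior_Icc] at ht
        exact ((hd t ht (by simp)).differentiableAt).differentiableWithinAt
      · intro t ht
        rw [interior_Icc] at ht
        rw [(hd t ht (by simp)).deriv]
        exact hp t ht (by simp)
    exact hm (left_mem_Icc.2 hab) (right_mem_Icc.2 hab) hab
  | @insert z F hz ih =>
    intro a b φ φ' hab hc hd hp
    by_cases hzab : z ∈ Ioo a b
    · have h1 : φ a ≤ φ z := by
        refine ih (φ' := φ') hzab.1.le (hc.mono (Icc_subset_Icc le_rfl hzab.2.le)) ?_ ?_
        · intro t ht htF
          exact hd t ⟨ht.1, ht.2.trans hzab.2⟩ (by simp [htF, ne_of_lt ht.2])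
        · intro t ht htF
          exact hp t ⟨ht.1, ht.2.trans hzab.2⟩ (by simp [htF, ne_of_lt ht.2])
      have h2 : φ z ≤ φ b := by
        refine ih (φ' := φ') hzab.2.le (hc.mono (Icc_subset_Icc hzab.1.le le_rfl)) ?_ ?_
        · intro t ht htF
          exact hd t ⟨hzab.1.trans ht.1, ht.2⟩ (by simp [htF, (ne_of_gt ht.1)])
        · intro t ht htF
          exact hp t ⟨hzab.1.trans ht.1, ht.2⟩ (by simp [htF, (ne_of_gt ht.1)])
      exact h1.trans h2
    · refine ih (φ' := φ') hab hc ?_ ?_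
      · intro t ht htF
        exact hd t ht (by simp [htF]; rintro rfl; exact hzab ht)
      · intro t ht htF
        exact hp t ht (by simp [htF]; rintro rfl; exact hzab ht)



lemma sq_integral_le_measure_mul {α : Type*} [MeasurableSpace α] (μ : Measure α)
    [IsFiniteMeasure μ] {f : α → ℝ} (hf : Integrable f μ)
    (hf2 : Integrable (fun a => f a ^ 2) μ) :
    (∫ a, f a ∂μ) ^ 2 ≤ (μ Set.univ).toReal * ∫ a, f a ^ 2 ∂μ := by
  set M := (μ Set.univ).toReal with hM
  set I := ∫ a, f a ∂μ with hI
  rcases eq_or_lt_of_le (ENNReal.toReal_nonneg : (0:ℝ) ≤ M) with h0 | h0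
  · have hμ : μ = 0 := by
      have := measure_ne_top μ Set.univ
      rcases ENNReal.toReal_eq_zero_iff _ |>.1 h0.symm with h | h
      · exact Measure.measure_univ_eq_zero.1 h
      · exact absurd h this
    simp [hI, hμ]
  · have key : 0 ≤ ∫ a, (M * f a - I) ^ 2 ∂μ := integral_nonneg fun a => sq_nonneg _
    have expand : ∫ a, (M * f a - I) ^ 2 ∂μ
        = M ^ 2 * (∫ a, f a ^ 2 ∂μ) - 2 * M * I * I + I ^ 2 * M := by
      have h1 : ∀ a, (M * f a - I) ^ 2
          = M ^ 2 * f a ^ 2 - (2 * M * I) * f a + I ^ 2 := by intro a; ring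
      simp_rw [h1]
      rw [integral_add, integral_sub, integral_const_mul, integral_const_mul, integral_const]
      · ring_nf
        rw [← hI, measureReal_def, ← hM]; ring
      · exact hf2.const_mul _
      · exact hf.const_mul _
      · exact (hf2.const_mul _).sub (hf.const_mul _)
      · exact integrable_const _
    rw [expand] at key
    nlinarith [key, h0]



lemma semiconvex_support_line {W : ℝ → ℝ} {c : ℝ}
    (hW1 : ContDiff ℝ 1 W)
    (hconv : ConvexOn ℝ Set.univ (fun z => W z + c / 2 * z ^ 2))
    (a b : ℝ) :
    W a - W b ≤ -(deriv W a) * (b - a) + c / 2 * (b - a) ^ 2 := by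
  have hdW : ∀ z : ℝ, HasDerivAt W (deriv W z) z :=
    fun z => (hW1.differentiable one_ne_zero z).hasDerivAt
  have hdφ : HasDerivAt (fun z => W z + c / 2 * z ^ 2) (deriv W a + c * a) a := by
    have := (hdW a).add (((hasDerivAt_pow 2 a).const_mul (c/2)))
    exact this.congr_deriv (by norm_num; ring)
  have key : W a + c / 2 * a ^ 2 + (deriv W a + c * a) * (b - a)
      ≤ W b + c / 2 * b ^ 2 := by
    rcases lt_trichotomy a b with h | h | h
    · have := hconv.le_slope_of_hasDerivAt (mem_univ a) (mem_univ b) h hdφ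
      rw [slope_def_field] at this
      have hba : (0:ℝ) < b - a := by linarith
      rw [le_div_iff₀ hba] at this
      linarith
    · simp [h]
    · have := hconv.slope_le_of_hasDerivAt (mem_univ b) (mem_univ a) h hdφ
      rw [slope_def_field] at this
      have hab : (0:ℝ) < a - b := by linarith
      rw [div_le_iff₀ hab] at this
      linarith
  nlinarith [key]



lemma support_sq_bound {A B a b c : ℝ} (h : A - B ≤ -a * b + c / 2 * b ^ 2) :
    A - B ≤ 1/2 * a ^ 2 + (c+1)/2 * b ^ 2 := by
  nlinarith [sq_nonneg (a + b), h]


/-- Hypotheses on the interaction potential `W`: continuously differentiable,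
even, derivative of at most linear growth, and semiconvex with constant `c`. -/
def WHyp (W : ℝ → ℝ) (c : ℝ) : Prop :=
  ContDiff ℝ 1 W ∧ (∀ x, W x = W (-x)) ∧
  (∃ K : ℝ, ∀ x, |deriv W x| ≤ K * (1 + |x|)) ∧
  0 < c ∧ ConvexOn ℝ Set.univ (fun x => W x + c / 2 * x ^ 2)

/-- Sticky particle trajectories: `γ i` is the path of the `i`-th particle,
`rd i t` and `ld i t` are the right and left derivatives `γ̇ᵢ(t+)`, `γ̇ᵢ(t−)`.
The conditions encode: continuity and piecewise-C² regularity with Newton's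
equations (a) holding away from finitely many (collision) times, initial
conditions (b), stickiness (c), and perfectly inelastic collisions (d). -/
def StickyTrajectories (N : ℕ) (x m v : Fin N → ℝ) (W : ℝ → ℝ)
    (γ rd ld : Fin N → ℝ → ℝ) : Prop :=
  (∀ i, ContinuousOn (γ i) (Ici (0:ℝ))) ∧
  -- one-sided derivatives
  (∀ i, ∀ t : ℝ, 0 ≤ t → HasDerivWithinAt (γ i) (rd i t) (Ici t) t) ∧
  (∀ i, ∀ t : ℝ, 0 < t → HasDerivWithinAt (γ i) (ld i t) (Iic t) t) ∧
  -- (a) Newton's equations away from finitely many times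
  (∃ F : Finset ℝ, ∀ i, ∀ t : ℝ, 0 < t → t ∉ F →
      HasDerivAt (γ i) (rd i t) t ∧
      HasDerivAt (rd i) (-∑ j, m j * deriv W (γ i t - γ j t)) t) ∧
  -- (b) initial conditions
  (∀ i, γ i 0 = x i) ∧ (∀ i, rd i 0 = v i) ∧
  -- (c) stickiness
  (∀ i j, ∀ s t : ℝ, 0 ≤ s → s ≤ t → γ i s = γ j s → γ i t = γ j t) ∧
  -- (d) perfectly inelastic collisions: momentum averaging
  (∀ t : ℝ, 0 < t → ∀ I : Finset (Fin N), I.Nonempty →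
      (∀ i ∈ I, ∀ j ∈ I, γ i t = γ j t) →
      (∀ i, i ∉ I → ∀ j ∈ I, γ i t ≠ γ j t) →
      ∀ j ∈ I, rd j t = (∑ i ∈ I, m i * ld i t) / ∑ i ∈ I, m i)

/-- Lemma 3.6 (kinetic energy estimates). -/
theorem sticky_particle_energy_estimates
    (N : ℕ) (x m v : Fin N → ℝ) (W : ℝ → ℝ) (c : ℝ)
    (hx : Function.Injective x)
    (hm : ∀ i, 0 < m i) (hsum : ∑ i, m i = 1)
    (hW : WHyp W c)
    (γ rd ld : Fin N → ℝ → ℝ)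
    (hγ : StickyTrajectories N x m v W γ rd ld)
    -- the energy is nonincreasing
    (hE : ∀ s t : ℝ, 0 ≤ s → s < t →
      (1/2) * (∑ i, m i * (rd i t) ^ 2) +
        (1/2) * (∑ i, ∑ j, m i * m j * W (γ i t - γ j t)) ≤
      (1/2) * (∑ i, m i * (rd i s) ^ 2) +
        (1/2) * (∑ i, ∑ j, m i * m j * W (γ i s - γ j s)))
    (θ : ℝ → ℝ)
    (hθ : ∀ t, θ t =
      Real.exp ((c + 1) * t ^ 2) * ∫ s in (0:ℝ)..t, Real.exp (-(c + 1) * s ^ 2)) :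
    (∀ t : ℝ, 0 ≤ t →
      (∫ s in (0:ℝ)..t, ∑ i, m i * (rd i s) ^ 2) ≤
        ((∑ i, m i * (v i) ^ 2) +
          (1/2) * ∑ i, ∑ j, m i * m j * (deriv W (x i - x j)) ^ 2) * θ t) ∧
    (∃ F : Finset ℝ, ∀ t : ℝ, 0 ≤ t → t ∉ F →
      (∑ i, m i * (rd i t) ^ 2) ≤
        ((∑ i, m i * (v i) ^ 2) +
          (1/2) * ∑ i, ∑ j, m i * m j * (deriv W (x i - x j)) ^ 2) * deriv θ t) := by
  obtain ⟨hγc, hrd, hld, ⟨F, hF⟩, hγ0, hrd0, hstick, hcol⟩ := hγ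
  obtain ⟨hW1, hWeven, hWgrow, hc, hconv⟩ := hW
  obtain ⟨A, hAdef⟩ : ∃ A : ℝ, A = (∑ i, m i * (v i) ^ 2) +
      (1/2) * ∑ i, ∑ j, m i * m j * (deriv W (x i - x j)) ^ 2 := ⟨_, rfl⟩
  obtain ⟨K, hKdef⟩ : ∃ K : ℝ → ℝ, K = fun s => ∑ i, m i * (rd i s) ^ 2 := ⟨_, rfl⟩
  have hKs : ∀ s, K s = ∑ i, m i * (rd i s) ^ 2 := fun s => by rw [hKdef]
  have hKnn : ∀ s, 0 ≤ K s := fun s => by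
    rw [hKs s]
    exact Finset.sum_nonneg fun i _ => mul_nonneg (hm i).le (sq_nonneg _)
  have hA2 : 0 ≤ (1/2) * ∑ i, ∑ j, m i * m j * (deriv W (x i - x j)) ^ 2 := by
    apply mul_nonneg (by norm_num)
    exact Finset.sum_nonneg fun i _ => Finset.sum_nonneg fun j _ =>
      mul_nonneg (mul_nonneg (hm i).le (hm j).le) (sq_nonneg _)
  have hA0 : 0 ≤ A := by
    rw [hAdef]
    have : 0 ≤ ∑ i, m i * (v i) ^ 2 :=
      Finset.sum_nonneg fun i _ => mul_nonneg (hm i).le (sq_nonneg _)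
    linarith
  have hK0 : K 0 = ∑ i, m i * (v i) ^ 2 := by
    rw [hKs 0]
    exact Finset.sum_congr rfl fun i _ => by rw [hrd0 i]
  have hc1 : (0:ℝ) < c + 1 := by linarith
  -- boundedness of K on compacts from the energy inequality
  have hbound : ∀ T : ℝ, 0 ≤ T → ∃ C : ℝ, ∀ s ∈ Icc (0:ℝ) T, K s ≤ C := by
    intro T hT
    obtain ⟨B, hBdef⟩ : ∃ B : ℝ → ℝ,
        B = fun s => ∑ i, ∑ j, m i * m j * (W (x i - x j) - W (γ i s - γ j s)) := ⟨_, rfl⟩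
    have hBs : ∀ s, B s = ∑ i, ∑ j, m i * m j * (W (x i - x j) - W (γ i s - γ j s)) :=
      fun s => by rw [hBdef]
    have hBc : ContinuousOn B (Icc (0:ℝ) T) := by
      rw [hBdef]
      apply continuousOn_finset_sum
      intro i _
      apply continuousOn_finset_sum
      intro j _
      apply ContinuousOn.mul continuousOn_const
      apply ContinuousOn.sub continuousOn_const
      exact hW1.continuous.comp_continuousOn
        (((hγc i).mono Icc_subset_Ici_self).sub ((hγc j).mono Icc_subset_Ici_self))
    obtain ⟨s0, hs0, hmax⟩ := isCompact_Icc.exists_isMaxOn ⟨0, left_mem_Icc.2 hT⟩ hBc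
    refine ⟨K 0 + max (B s0) 0, fun s hs => ?_⟩
    rcases eq_or_lt_of_le hs.1 with h0 | h0
    · rw [← h0]
      have := le_max_right (B s0) 0
      linarith
    · have hEt := hE 0 s le_rfl h0
      simp only [hγ0, hrd0] at hEt
      have hBsub : B s = (∑ i, ∑ j, m i * m j * W (x i - x j))
          - ∑ i, ∑ j, m i * m j * W (γ i s - γ j s) := by
        rw [hBs s]
        simp [mul_sub, Finset.sum_sub_distrib]
      have h1 : K s ≤ K 0 + B s := by
        rw [hK0, hBsub, hKs s]
        linarith
      have h2 : B s ≤ max (B s0) 0 := le_trans (hmax hs) (le_max_left _ _)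
      linarith
  -- measurability
  have hmeas : ∀ (i : Fin N) (T : ℝ),
      AEStronglyMeasurable (rd i) (volume.restrict (Ioc (0:ℝ) T)) := by
    intro i T
    have hSm : MeasurableSet (Ioc (0:ℝ) T \ (F : Set ℝ)) :=
      measurableSet_Ioc.diff (F.finite_toSet.measurableSet)
    have hcS : ContinuousOn (rd i) (Ioc (0:ℝ) T \ (F : Set ℝ)) := by
      intro s hs
      exact ((hF i s hs.1.1
        (by simpa using hs.2)).2.differentiableAt.continuousAt).continuousWithinAt
    have h1 : AEStronglyMeasurable (rd i) (volume.restrict (Ioc (0:ℝ) T \ (F : Set ℝ))) :=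
      hcS.aestronglyMeasurable hSm
    have heq : Ioc (0:ℝ) T =ᵐ[volume] (Ioc (0:ℝ) T \ (F : Set ℝ)) := by
      refine MeasureTheory.ae_eq_set.2 ?_
      constructor
      · exact measure_mono_null (fun z hz => by
          by_cases h : z ∈ (F : Set ℝ)
          · exact h
          · exact absurd ⟨hz.1, h⟩ hz.2) (F.finite_toSet.measure_zero _)
      · exact measure_mono_null (fun z hz => absurd hz.1.1 hz.2 : _ ⊆ (∅:Set ℝ)) (by simp)
    rwa [Measure.restrict_congr_set heq]
  -- integrability of bounded a.e.-measurable functions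
  have hint : ∀ (f : ℝ → ℝ) (T : ℝ), 0 ≤ T →
      AEStronglyMeasurable f (volume.restrict (Ioc (0:ℝ) T)) →
      (∃ C : ℝ, ∀ s ∈ Ioc (0:ℝ) T, |f s| ≤ C) →
      IntervalIntegrable f volume 0 T := by
    intro f T hT hfm ⟨C, hC⟩
    rw [intervalIntegrable_iff_integrableOn_Ioc_of_le hT]
    refine Integrable.mono' (integrable_const C) hfm ?_
    rw [ae_restrict_iff' measurableSet_Ioc]
    exact ae_of_all _ fun s hs => by rw [Real.norm_eq_abs]; exact hC s hs
  -- per particle bound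
  have hrdb : ∀ (i : Fin N) (T : ℝ), 0 ≤ T →
      ∃ C : ℝ, ∀ s ∈ Icc (0:ℝ) T, |rd i s| ≤ C := by
    intro i T hT
    obtain ⟨C, hC⟩ := hbound T hT
    refine ⟨Real.sqrt (C / m i), fun s hs => ?_⟩
    have h1 : m i * rd i s ^ 2 ≤ K s := by
      rw [hKs s]
      exact Finset.single_le_sum (f := fun j => m j * (rd j s) ^ 2)
        (fun j _ => mul_nonneg (hm j).le (sq_nonneg _)) (Finset.mem_univ i)
    have h2 : rd i s ^ 2 ≤ C / m i := by
      rw [le_div_iff₀ (hm i)]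
      nlinarith [hC s hs]
    calc |rd i s| = Real.sqrt (rd i s ^ 2) := (Real.sqrt_sq_eq_abs _).symm
    _ ≤ Real.sqrt (C / m i) := Real.sqrt_le_sqrt h2
  have hi1 : ∀ (i : Fin N) (T : ℝ), 0 ≤ T → IntervalIntegrable (rd i) volume 0 T := by
    intro i T hT
    obtain ⟨C, hC⟩ := hrdb i T hT
    exact hint _ _ hT (hmeas i T) ⟨C, fun s hs => hC s (Ioc_subset_Icc_self hs)⟩
  have hi2 : ∀ (i : Fin N) (T : ℝ), 0 ≤ T →
      IntervalIntegrable (fun s => rd i s ^ 2) volume 0 T := by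
    intro i T hT
    obtain ⟨C, hC⟩ := hrdb i T hT
    refine hint _ _ hT ?_ ⟨C ^ 2, fun s hs => ?_⟩
    · exact ((hmeas i T).mul (hmeas i T)).congr (ae_of_all _ fun s => (sq (rd i s)).symm)
    · calc |rd i s ^ 2| = |rd i s| ^ 2 := abs_pow _ 2
      _ ≤ C ^ 2 := pow_le_pow_left₀ (abs_nonneg _) (hC s (Ioc_subset_Icc_self hs)) 2
  have hiK : ∀ (T : ℝ), 0 ≤ T → IntervalIntegrable K volume 0 T := by
    intro T hT
    obtain ⟨C, hC⟩ := hbound T hT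
    refine hint _ _ hT ?_ ⟨C, fun s hs => ?_⟩
    · rw [hKdef]
      apply Finset.aestronglyMeasurable_fun_sum
      intro i _
      exact (aestronglyMeasurable_const.mul
        (((hmeas i T).mul (hmeas i T)).congr (ae_of_all _ fun s => (sq (rd i s)).symm)))
    · rw [abs_of_nonneg (hKnn s)]
      exact hC s (Ioc_subset_Icc_self hs)
  have hid : ∀ (i j : Fin N) (T : ℝ), 0 ≤ T →
      IntervalIntegrable (fun s => (rd i s - rd j s) ^ 2) volume 0 T := by
    intro i j T hT
    obtain ⟨Ci, hCi⟩ := hrdb i T hT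
    obtain ⟨Cj, hCj⟩ := hrdb j T hT
    refine hint _ _ hT ?_ ⟨(Ci + Cj) ^ 2, fun s hs => ?_⟩
    · exact (((hmeas i T).sub (hmeas j T)).mul ((hmeas i T).sub (hmeas j T))).congr
        (ae_of_all _ fun s => (sq (rd i s - rd j s)).symm)
    · have h1 : |rd i s - rd j s| ≤ Ci + Cj :=
        (abs_sub _ _).trans (add_le_add (hCi s (Ioc_subset_Icc_self hs))
          (hCj s (Ioc_subset_Icc_self hs)))
      calc |(rd i s - rd j s) ^ 2| = |rd i s - rd j s| ^ 2 := abs_pow _ 2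
      _ ≤ (Ci + Cj) ^ 2 := pow_le_pow_left₀ (abs_nonneg _) h1 2
  -- FTC
  have hFTC : ∀ (i : Fin N) (t : ℝ), 0 ≤ t → γ i t - x i = ∫ s in (0:ℝ)..t, rd i s := by
    intro i t ht
    have h := intervalIntegral.integral_eq_sub_of_hasDeriv_right_of_le ht
      ((hγc i).mono Icc_subset_Ici_self)
      (fun s hs => (hrd i s hs.1.le).mono Ioi_subset_Ici_self)
      (hi1 i t ht)
    rw [h, hγ0 i]
  obtain ⟨g, hgdef⟩ : ∃ g : ℝ → ℝ, g = fun t => ∫ s in (0:ℝ)..t, K s := ⟨_, rfl⟩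
  have hgs : ∀ t, g t = ∫ s in (0:ℝ)..t, K s := fun t => by rw [hgdef]
  have hg0 : g 0 = 0 := by rw [hgs 0]; exact intervalIntegral.integral_same
  -- the key integral inequality
  have hgrow : ∀ t : ℝ, 0 ≤ t → K t ≤ A + 2*(c+1)*t * g t := by
    intro t ht
    rcases eq_or_lt_of_le ht with h0 | h0
    · rw [← h0, hg0, hK0, hAdef]
      linarith
    · have hEt := hE 0 t le_rfl h0
      simp only [hγ0, hrd0] at hEt
      obtain ⟨d, hddef⟩ : ∃ d : Fin N → Fin N → ℝ,
          d = fun i j => γ i t - γ j t - (x i - x j) := ⟨_, rfl⟩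
      have hds : ∀ i j, d i j = γ i t - γ j t - (x i - x j) := fun i j => by rw [hddef]
      have hdint : ∀ i j : Fin N, d i j = ∫ s in (0:ℝ)..t, (rd i s - rd j s) := by
        intro i j
        rw [hds i j, intervalIntegral.integral_sub (hi1 i t ht) (hi1 j t ht)]
        have h1 := hFTC i t ht
        have h2 := hFTC j t ht
        linarith
      have step1 : ∀ i j : Fin N,
          m i * m j * (W (x i - x j) - W (γ i t - γ j t)) ≤
          m i * m j * ((1/2) * (deriv W (x i - x j)) ^ 2 + ((c+1)/2) * (d i j) ^ 2) := by
        intro i j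
        have h := semiconvex_support_line hW1 hconv (x i - x j) (γ i t - γ j t)
        rw [show γ i t - γ j t - (x i - x j) = d i j from (hds i j).symm] at h
        exact mul_le_mul_of_nonneg_left (support_sq_bound h)
          (mul_nonneg (hm i).le (hm j).le)
      have step2 : K t ≤ (∑ i, m i * (v i) ^ 2)
          + ∑ i, ∑ j, m i * m j * (W (x i - x j) - W (γ i t - γ j t)) := by
        have hsub : ∑ i, ∑ j, m i * m j * (W (x i - x j) - W (γ i t - γ j t))
            = (∑ i, ∑ j, m i * m j * W (x i - x j))
              - ∑ i, ∑ j, m i * m j * W (γ i t - γ j t) := by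
          simp [mul_sub, Finset.sum_sub_distrib]
        rw [hsub, hKs t]
        linarith
      have step2' : ∑ i, ∑ j, m i * m j * (W (x i - x j) - W (γ i t - γ j t))
          ≤ (1/2) * (∑ i, ∑ j, m i * m j * (deriv W (x i - x j)) ^ 2)
            + ((c+1)/2) * ∑ i, ∑ j, m i * m j * (d i j) ^ 2 := by
        refine le_trans (Finset.sum_le_sum fun i _ =>
          Finset.sum_le_sum fun j _ => step1 i j) (le_of_eq ?_)
        rw [Finset.mul_sum, Finset.mul_sum, ← Finset.sum_add_distrib]
        refine Finset.sum_congr rfl fun i _ => ?_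
        rw [Finset.mul_sum, Finset.mul_sum, ← Finset.sum_add_distrib]
        refine Finset.sum_congr rfl fun j _ => ?_
        ring
      haveI hIoc : IsFiniteMeasure (volume.restrict (Ioc (0:ℝ) t)) := by
        constructor
        rw [Measure.restrict_apply_univ]
        exact measure_Ioc_lt_top
      have stepCS : ∀ i j : Fin N,
          (d i j) ^ 2 ≤ t * ∫ s in (0:ℝ)..t, (rd i s - rd j s) ^ 2 := by
        intro i j
        rw [hdint i j, intervalIntegral.integral_of_le ht, intervalIntegral.integral_of_le ht]
        have hf : Integrable (fun s => rd i s - rd j s) (volume.restrict (Ioc (0:ℝ) t)) := by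
          have h := (hi1 i t ht).sub (hi1 j t ht)
          rwa [intervalIntegrable_iff_integrableOn_Ioc_of_le ht] at h
        have hf2 : Integrable (fun s => (rd i s - rd j s) ^ 2)
            (volume.restrict (Ioc (0:ℝ) t)) := by
          have h := hid i j t ht
          rwa [intervalIntegrable_iff_integrableOn_Ioc_of_le ht] at h
        have h := sq_integral_le_measure_mul (volume.restrict (Ioc (0:ℝ) t)) hf hf2
        have hμ : ((volume.restrict (Ioc (0:ℝ) t)) Set.univ).toReal = t := by
          rw [Measure.restrict_apply_univ, Real.volume_Ioc, sub_zero, ENNReal.toReal_ofReal ht]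
        rwa [hμ] at h
      have stepMono : ∀ i j : Fin N, (∫ s in (0:ℝ)..t, (rd i s - rd j s) ^ 2)
          ≤ (∫ s in (0:ℝ)..t, rd i s ^ 2) * 2 + (∫ s in (0:ℝ)..t, rd j s ^ 2) * 2 := by
        intro i j
        have h1 : (∫ s in (0:ℝ)..t, (rd i s - rd j s) ^ 2)
            ≤ ∫ s in (0:ℝ)..t, (2 * rd i s ^ 2 + 2 * rd j s ^ 2) := by
          apply intervalIntegral.integral_mono_on ht (hid i j t ht)
            (((hi2 i t ht).const_mul 2).add ((hi2 j t ht).const_mul 2))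
          intro s _
          nlinarith [sq_nonneg (rd i s + rd j s)]
        rw [intervalIntegral.integral_add ((hi2 i t ht).const_mul 2)
            ((hi2 j t ht).const_mul 2), intervalIntegral.integral_const_mul,
          intervalIntegral.integral_const_mul] at h1
        linarith
      obtain ⟨Q, hQdef⟩ : ∃ Q : Fin N → ℝ, Q = fun i => ∫ s in (0:ℝ)..t, rd i s ^ 2 :=
        ⟨_, rfl⟩
      have hQs : ∀ i, Q i = ∫ s in (0:ℝ)..t, rd i s ^ 2 := fun i => by rw [hQdef]
      have hgQ : g t = ∑ i, m i * Q i := by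
        rw [hgs t]
        simp only [hKdef]
        rw [intervalIntegral.integral_finset_sum (fun i _ => (hi2 i t ht).const_mul (m i))]
        refine Finset.sum_congr rfl fun i _ => ?_
        rw [intervalIntegral.integral_const_mul, hQs i]
      have stepD : ∑ i, ∑ j, m i * m j * (d i j) ^ 2 ≤ 4 * t * g t := by
        have h1 : ∀ i j : Fin N, m i * m j * (d i j) ^ 2
            ≤ m i * m j * (t * (Q i * 2 + Q j * 2)) := by
          intro i j
          apply mul_le_mul_of_nonneg_left _ (mul_nonneg (hm i).le (hm j).le)
          calc (d i j) ^ 2 ≤ t * ∫ s in (0:ℝ)..t, (rd i s - rd j s) ^ 2 := stepCS i j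
          _ ≤ t * (Q i * 2 + Q j * 2) := by
              rw [hQs i, hQs j]
              exact mul_le_mul_of_nonneg_left (stepMono i j) ht
        calc ∑ i, ∑ j, m i * m j * (d i j) ^ 2
            ≤ ∑ i, ∑ j, m i * m j * (t * (Q i * 2 + Q j * 2)) :=
              Finset.sum_le_sum fun i _ => Finset.sum_le_sum fun j _ => h1 i j
        _ = 4 * t * g t := by
            rw [hgQ]
            have hrow : ∀ i : Fin N, ∑ j, m i * m j * (t * (Q i * 2 + Q j * 2))
                = 2*t*(m i * Q i) + 2*t*(∑ k, m k * Q k) * m i := by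
              intro i
              have he : ∀ j : Fin N, m i * m j * (t * (Q i * 2 + Q j * 2))
                  = 2*t*(m i * Q i) * m j + (2*t*m i) * (m j * Q j) := fun j => by ring
              rw [Finset.sum_congr rfl fun j _ => he j, Finset.sum_add_distrib,
                ← Finset.mul_sum, ← Finset.mul_sum, hsum]
              ring
            rw [Finset.sum_congr rfl fun i _ => hrow i, Finset.sum_add_distrib,
              ← Finset.mul_sum, ← Finset.mul_sum, hsum]
            ring
      calc K t ≤ (∑ i, m i * (v i) ^ 2)
            + ∑ i, ∑ j, m i * m j * (W (x i - x j) - W (γ i t - γ j t)) := step2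
      _ ≤ (∑ i, m i * (v i) ^ 2) + ((1/2) * (∑ i, ∑ j, m i * m j * (deriv W (x i - x j)) ^ 2)
            + ((c+1)/2) * ∑ i, ∑ j, m i * m j * (d i j) ^ 2) := by linarith [step2']
      _ ≤ A + 2*(c+1)*t * g t := by
          have hcc : (0:ℝ) ≤ (c+1)/2 := by linarith
          have h5 := mul_le_mul_of_nonneg_left stepD hcc
          rw [hAdef]
          nlinarith [h5]
  -- Gronwall
  have part1 : ∀ T : ℝ, 0 ≤ T → g T ≤ A * θ T := by
    intro T hT
    have hcontinner : Continuous (fun s : ℝ => Real.exp (-(c+1)*s^2)) :=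
      Real.continuous_exp.comp (continuous_const.mul (continuous_pow 2) : Continuous fun s : ℝ => (-(c+1)) * s^2)
    obtain ⟨P, hPdef⟩ : ∃ P : ℝ → ℝ,
        P = fun u => ∫ s in (0:ℝ)..u, Real.exp (-(c+1)*s^2) := ⟨_, rfl⟩
    have hPs : ∀ u, P u = ∫ s in (0:ℝ)..u, Real.exp (-(c+1)*s^2) := fun u => by rw [hPdef]
    have hP0 : P 0 = 0 := by rw [hPs 0]; exact intervalIntegral.integral_same
    have hPc : Continuous P := by
      rw [hPdef]
      exact intervalIntegral.continuous_primitive (fun a b => hcontinner.intervalIntegrable a b) 0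
    have hexp : ∀ u : ℝ, HasDerivAt P (Real.exp (-(c+1)*u^2)) u := by
      intro u
      rw [hPdef]
      exact (hcontinner.integral_hasStrictDerivAt 0 u).hasDerivAt
    rcases eq_or_lt_of_le hT with h0 | h0
    · rw [← h0, hg0, hθ 0]
      simp
    · obtain ⟨φ, hφdef⟩ : ∃ φ : ℝ → ℝ,
          φ = fun u => A * P u - Real.exp (-(c+1)*u^2) * g u := ⟨_, rfl⟩
      have hφs : ∀ u, φ u = A * P u - Real.exp (-(c+1)*u^2) * g u := fun u => by rw [hφdef]
      obtain ⟨φ', hφ'def⟩ : ∃ φ' : ℝ → ℝ,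
          φ' = fun u => Real.exp (-(c+1)*u^2) * (A + 2*(c+1)*u * g u - K u) := ⟨_, rfl⟩
      have hφ's : ∀ u, φ' u = Real.exp (-(c+1)*u^2) * (A + 2*(c+1)*u * g u - K u) :=
        fun u => by rw [hφ'def]
      have hgc : ContinuousOn g (Icc (0:ℝ) T) := by
        have h1 : IntegrableOn K (Icc (0:ℝ) T) volume := by
          have h := hiK T hT
          rwa [intervalIntegrable_iff_integrableOn_Icc_of_le hT] at h
        have h2 := intervalIntegral.continuousOn_primitive_interval
          (μ := volume) (f := K) (a := (0:ℝ)) (b := T) (by rwa [uIcc_of_le hT])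
        rw [hgdef]
        rwa [uIcc_of_le hT] at h2
      have hφc : ContinuousOn φ (Icc (0:ℝ) T) := by
        rw [hφdef]
        apply ContinuousOn.sub
        · exact (continuous_const.mul hPc).continuousOn
        · exact hcontinner.continuousOn.mul hgc
      have hKat : ∀ w : ℝ, 0 < w → w ∉ F → ContinuousAt K w := by
        intro w hw hwF
        have h : ∀ i : Fin N, ContinuousAt (fun s => m i * rd i s ^ 2) w := fun i =>
          continuousAt_const.mul (((hF i w hw hwF).2.differentiableAt.continuousAt).pow 2)
        rw [hKdef]
        exact tendsto_finset_sum _ fun i _ => h i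
      have hVopen : IsOpen ((Ioi (0:ℝ)) ∩ ((F:Set ℝ))ᶜ) :=
        isOpen_Ioi.inter (F.finite_toSet.isClosed.isOpen_compl)
      have hKmeasU : AEStronglyMeasurable K
          (volume.restrict ((Ioi (0:ℝ)) ∩ ((F:Set ℝ))ᶜ)) := by
        apply ContinuousOn.aestronglyMeasurable _ hVopen.measurableSet
        intro w hw
        exact (hKat w hw.1 (by simpa using hw.2)).continuousWithinAt
      have hφd : ∀ u ∈ Ioo (0:ℝ) T, u ∉ insert (0:ℝ) F → HasDerivAt φ (φ' u) u := by
        intro u hu huF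
        have hu0 : 0 < u := hu.1
        have huF' : u ∉ F := fun h => huF (Finset.mem_insert_of_mem h)
        have hgd : HasDerivAt g (K u) u := by
          rw [hgdef]
          exact intervalIntegral.integral_hasDerivAt_right (hiK u hu0.le)
            ⟨_, hVopen.mem_nhds ⟨hu0, by simpa using huF'⟩, hKmeasU⟩ (hKat u hu0 huF')
        have hEd : HasDerivAt (fun w : ℝ => Real.exp (-(c+1)*w^2))
            (Real.exp (-(c+1)*u^2) * (-(c+1)*(2*u))) u := by
          have hin : HasDerivAt (fun w : ℝ => -(c+1)*w^2) (-(c+1)*(2*u)) u := by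
            simpa using (hasDerivAt_pow 2 u).const_mul (-(c+1))
          exact hin.exp
        have hcomb := ((hexp u).const_mul A).sub (hEd.mul hgd)
        have heq : φ' u = A * Real.exp (-(c+1)*u^2)
            - (Real.exp (-(c+1)*u^2) * (-(c+1)*(2*u)) * g u
              + Real.exp (-(c+1)*u^2) * K u) := by
          rw [hφ's u]; ring
        rw [hφdef, heq]
        exact hcomb
      have hφp : ∀ u ∈ Ioo (0:ℝ) T, u ∉ insert (0:ℝ) F → 0 ≤ φ' u := by
        intro u hu _
        rw [hφ's u]
        apply mul_nonneg (Real.exp_pos _).le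
        linarith [hgrow u hu.1.le]
      have hmono := mono_of_finset_exceptions (insert (0:ℝ) F) hT hφc hφd hφp
      have hφ0 : φ 0 = 0 := by
        rw [hφs 0, hP0, hg0]
        ring
      rw [hφ0, hφs T] at hmono
      have hET : Real.exp (-(c+1)*T^2) * Real.exp ((c+1)*T^2) = 1 := by
        have hz : -(c+1)*T^2 + (c+1)*T^2 = 0 := by ring
        rw [← Real.exp_add, hz, Real.exp_zero]
      have h2 : Real.exp (-(c+1)*T^2) * g T ≤ A * P T := by linarith
      have h3 := mul_le_mul_of_nonneg_right h2 (Real.exp_pos ((c+1)*T^2)).le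
      have h4 : g T ≤ A * P T * Real.exp ((c+1)*T^2) := by
        calc g T = Real.exp (-(c+1)*T^2) * g T * Real.exp ((c+1)*T^2) := by
              rw [mul_comm (Real.exp (-(c+1)*T^2)) (g T), mul_assoc, hET, mul_one]
        _ ≤ A * P T * Real.exp ((c+1)*T^2) := h3
      rw [hθ T, show (∫ s in (0:ℝ)..T, Real.exp (-(c + 1) * s ^ 2)) = P T from (hPs T).symm]
      calc g T ≤ A * P T * Real.exp ((c+1)*T^2) := h4
      _ = A * (Real.exp ((c+1)*T^2) * P T) := by ring
  -- derivative of θ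
  have hθd : ∀ t : ℝ, deriv θ t = 2*(c+1)*t * θ t + 1 := by
    intro t
    have hcontinner : Continuous (fun s : ℝ => Real.exp (-(c+1)*s^2)) :=
      Real.continuous_exp.comp (continuous_const.mul (continuous_pow 2) : Continuous fun s : ℝ => (-(c+1)) * s^2)
    have hPd : HasDerivAt (fun u => ∫ s in (0:ℝ)..u, Real.exp (-(c+1)*s^2))
        (Real.exp (-(c+1)*t^2)) t :=
      (hcontinner.integral_hasStrictDerivAt 0 t).hasDerivAt
    have hed : HasDerivAt (fun u : ℝ => Real.exp ((c+1)*u^2))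
        (Real.exp ((c+1)*t^2) * ((c+1)*(2*t))) t := by
      have hin : HasDerivAt (fun w : ℝ => (c+1)*w^2) ((c+1)*(2*t)) t := by
        simpa using (hasDerivAt_pow 2 t).const_mul (c+1)
      exact hin.exp
    have hfun : θ = fun u => Real.exp ((c+1)*u^2) * ∫ s in (0:ℝ)..u, Real.exp (-(c+1)*s^2) := by
      funext u
      exact hθ u
    have hprod := hed.mul hPd
    have h1 : Real.exp ((c+1)*t^2) * Real.exp (-(c+1)*t^2) = 1 := by
      have hz : (c+1)*t^2 + -(c+1)*t^2 = 0 := by ring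
      rw [← Real.exp_add, hz, Real.exp_zero]
    have hθhas : HasDerivAt θ
        (Real.exp ((c+1)*t^2) * ((c+1)*(2*t)) * (∫ s in (0:ℝ)..t, Real.exp (-(c+1)*s^2))
          + Real.exp ((c+1)*t^2) * Real.exp (-(c+1)*t^2)) t := by
      rw [hfun]
      exact hprod
    rw [hθhas.deriv, hθ t, h1]
    ring
  constructor
  · intro t ht
    have h := part1 t ht
    rw [hgs t, hAdef] at h
    simp only [hKdef] at h
    exact h
  · refine ⟨∅, fun t ht _ => ?_⟩
    have h1 := hgrow t ht
    have h2 := part1 t ht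
    have h3 : (0:ℝ) ≤ 2*(c+1)*t := by positivity
    have h4 : 2*(c+1)*t * g t ≤ 2*(c+1)*t * (A * θ t) := mul_le_mul_of_nonneg_left h2 h3
    have h5 : K t ≤ A * (2*(c+1)*t * θ t + 1) := by nlinarith [h1, h4]
    rw [← hθd t] at h5
    rw [← hAdef, ← hKs t]
    exact h5


end
end

section
/- Suppose T > 0 and y: [0,T) → ℝ is continuous and piecewise C², i.e., there are finitely many times 0 < t₁ < … < t_n < T such that y is C² on each complementary interval, and all one-sided derivatives ẏ(t±) exist for t ∈ (0,T) (with ẏ(0+) existing as well). Assume ẏ(t+) ≤ ẏ(t−) for each t ∈ (0,T), and that there is c > 0 such that ÿ(t) ≤ c y(t) for all t ∈ (0,T) outside {t₁,…,t_n}. Then y(t) ≤ cosh(√c t) y(0) + (1/√c) sinh(√c t) ẏ(0+) for all t ∈ [0,T). -/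
open MeasureTheory Real Filter Set Topology

noncomputable section

private lemma key_interval
    (c q a b : ℝ) (hc : 0 < c) (hq : 0 < q) (hq2 : q ^ 2 = c)
    (y rd : ℝ → ℝ) (hab : a < b)
    (hcont : ContinuousOn y (Icc a b))
    (hrda : HasDerivWithinAt y (rd a) (Ici a) a)
    (hC2 : ∀ t ∈ Ioo a b, HasDerivAt y (rd t) t ∧ ∃ d : ℝ, HasDerivAt rd d t ∧ d ≤ c * y t) :
    (∀ t ∈ Icc a b,
        y t ≤ Real.cosh (q * (t - a)) * y a + (1 / q) * Real.sinh (q * (t - a)) * rd a) ∧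
      ∀ ldb : ℝ, HasDerivWithinAt y ldb (Iic b) b →
        ldb ≤ q * Real.sinh (q * (b - a)) * y a + Real.cosh (q * (b - a)) * rd a := by
  have hrd' : ∀ t ∈ Ioo a b, HasDerivAt rd (deriv rd t) t ∧ deriv rd t ≤ c * y t := by
    intro t ht
    obtain ⟨-, d, hd, hdc⟩ := hC2 t ht
    refine ⟨?_, ?_⟩ <;> rw [hd.deriv] <;> assumption
  -- a bound on c * y on [a, b]
  obtain ⟨x₀, hx₀, hx₀max⟩ := isCompact_Icc.exists_isMaxOn (nonempty_Icc.2 hab.le) hcont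
  set M : ℝ := max (c * y x₀) 0 with hM
  have hM0 : 0 ≤ M := le_max_right _ _
  have hMy : ∀ t ∈ Icc a b, c * y t ≤ M := fun t ht =>
    le_max_of_le_left (mul_le_mul_of_nonneg_left (hx₀max ht) hc.le)
  -- rd - M * id is antitone on (a, b)
  have hrdM : AntitoneOn (fun t => rd t - M * t) (Ioo a b) := by
    apply antitoneOn_of_hasDerivWithinAt_nonpos (convex_Ioo a b)
      (f' := fun t => deriv rd t - M)
    · intro t ht
      exact ((hrd' t ht).1.continuousAt.continuousWithinAt).sub
        ((continuous_const.mul continuous_id).continuousWithinAt)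
    · rw [interior_Ioo]
      intro t ht
      have h := (hrd' t ht).1.sub ((hasDerivAt_id t).const_mul M)
      have h2 : HasDerivAt (fun t => rd t - M * t) (deriv rd t - M) t := by
        exact h.congr_deriv (by ring)
      exact h2.hasDerivWithinAt
    · rw [interior_Ioo]
      intro t ht
      have := hMy t (Ioo_subset_Icc_self ht)
      have := (hrd' t ht).2
      linarith
  -- ψ is antitone on (a, b)
  set ψ : ℝ → ℝ := fun t => Real.exp (q * t) * (rd t - q * y t) with hψdef
  have hψd : ∀ t ∈ Ioo a b, HasDerivAt ψ
      (Real.exp (q * t) * (q * 1) * (rd t - q * y t) +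
        Real.exp (q * t) * (deriv rd t - q * rd t)) t := by
    intro t ht
    have hexp : HasDerivAt (fun t => Real.exp (q * t)) (Real.exp (q * t) * (q * 1)) t :=
      ((hasDerivAt_id t).const_mul q).exp
    have hin : HasDerivAt (fun t => rd t - q * y t) (deriv rd t - q * rd t) t :=
      (hrd' t ht).1.sub ((hC2 t ht).1.const_mul q)
    exact hexp.mul hin
  have hψanti : AntitoneOn ψ (Ioo a b) := by
    apply antitoneOn_of_hasDerivWithinAt_nonpos (convex_Ioo a b)
      (f' := fun t => Real.exp (q * t) * (q * 1) * (rd t - q * y t) +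
        Real.exp (q * t) * (deriv rd t - q * rd t))
    · intro t ht
      exact ((hψd t ht).continuousAt.continuousWithinAt)
    · rw [interior_Ioo]
      intro t ht
      exact (hψd t ht).hasDerivWithinAt
    · rw [interior_Ioo]
      intro t ht
      have h1 : deriv rd t ≤ c * y t := (hrd' t ht).2
      have h2 : (0:ℝ) < Real.exp (q * t) := Real.exp_pos _
      have : Real.exp (q * t) * (q * 1) * (rd t - q * y t) +
          Real.exp (q * t) * (deriv rd t - q * rd t) =
          Real.exp (q * t) * (deriv rd t - c * y t) := by rw [← hq2]; ring
      rw [this]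
      exact mul_nonpos_of_nonneg_of_nonpos h2.le (by linarith)
  -- (★) rd s is bounded by the slope from a plus M * (s - a)
  have star : ∀ s ∈ Ioo a b, rd s ≤ (y s - y a) / (s - a) + M * (s - a) := by
    intro s hs
    obtain ⟨ξ, hξ, hξslope⟩ := exists_hasDerivAt_eq_slope y rd hs.1
      (hcont.mono (Icc_subset_Icc le_rfl hs.2.le))
      (fun x hx => (hC2 x ⟨hx.1, hx.2.trans hs.2⟩).1)
    have hξb : ξ ∈ Ioo a b := ⟨hξ.1, hξ.2.trans hs.2⟩
    have h1 : rd s - M * s ≤ rd ξ - M * ξ := hrdM hξb hs hξ.2.le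
    have h2 : M * (s - ξ) ≤ M * (s - a) :=
      mul_le_mul_of_nonneg_left (by linarith [hξ.1]) hM0
    rw [hξslope] at h1
    linarith
  -- E1 : the ψ-invariant propagates from the left endpoint a
  have E1 : ∀ t ∈ Ioo a b, ψ t ≤ Real.exp (q * a) * (rd a - q * y a) := by
    intro t ht
    have hmem : Ioo a t ∈ 𝓝[>] a := Ioo_mem_nhdsGT ht.1
    have hev : ∀ᶠ s in 𝓝[>] a,
        ψ t ≤ Real.exp (q * s) * ((y s - y a) / (s - a) + M * (s - a) - q * y s) := by
      filter_upwards [hmem] with s hs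
      have hsb : s ∈ Ioo a b := ⟨hs.1, hs.2.trans ht.2⟩
      have h1 : ψ t ≤ ψ s := hψanti hsb ht hs.2.le
      have h2 := star s hsb
      have h3 : (0:ℝ) < Real.exp (q * s) := Real.exp_pos _
      have h4 : ψ s ≤ Real.exp (q * s) * ((y s - y a) / (s - a) + M * (s - a) - q * y s) := by
        simp only [hψdef]
        nlinarith
      exact h1.trans h4
    have hslopetendsto : Tendsto (fun s => (y s - y a) / (s - a)) (𝓝[>] a) (𝓝 (rd a)) := by
      have := hasDerivWithinAt_iff_tendsto_slope.1 hrda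
      rw [Ici_sdiff_left] at this
      refine this.congr fun s => ?_
      rw [slope_def_field]
    have hy_a : Tendsto y (𝓝[>] a) (𝓝 (y a)) := by
      have h : Tendsto y (𝓝[Ioo a b] a) (𝓝 (y a)) :=
        (hcont a ⟨le_rfl, hab.le⟩).mono (Ioo_subset_Icc_self (a := a) (b := b))
      rwa [nhdsWithin_Ioo_eq_nhdsGT hab] at h
    have hexp : Tendsto (fun s => Real.exp (q * s)) (𝓝[>] a) (𝓝 (Real.exp (q * a))) :=
      ((Real.continuous_exp.comp (continuous_const.mul continuous_id)).tendsto a).mono_left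
        nhdsWithin_le_nhds
    have hMs : Tendsto (fun s => M * (s - a)) (𝓝[>] a) (𝓝 (M * (a - a))) :=
      ((continuous_const.mul (continuous_id.sub continuous_const)).tendsto a).mono_left
        nhdsWithin_le_nhds
    have hG : Tendsto (fun s => Real.exp (q * s) * ((y s - y a) / (s - a) + M * (s - a) - q * y s))
        (𝓝[>] a) (𝓝 (Real.exp (q * a) * (rd a + M * (a - a) - q * y a))) :=
      hexp.mul ((hslopetendsto.add hMs).sub (hy_a.const_mul q))
    have := ge_of_tendsto hG hev
    simpa using this
  -- Grönwall-type integration step: y t ≤ A t on [a, b]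
  have hfle : ∀ t ∈ Icc a b, Real.exp (-(q * t)) * y t ≤
      Real.exp (-(q * a)) * y a + (rd a - q * y a) * Real.exp (q * a) / (2 * q) *
        (Real.exp (-(2 * q * a)) - Real.exp (-(2 * q * t))) := by
    have hyr : ∀ x ∈ Ico a b, HasDerivWithinAt y (rd x) (Ici x) x := by
      intro x hx
      rcases eq_or_lt_of_le hx.1 with rfl | hax
      · exact hrda
      · exact (hC2 x ⟨hax, hx.2⟩).1.hasDerivWithinAt
    have hfc : ContinuousOn (fun t => Real.exp (-(q * t)) * y t) (Icc a b) :=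
      ((Real.continuous_exp.comp (continuous_const.mul continuous_id).neg).continuousOn).mul hcont
    have hf' : ∀ x ∈ Ico a b, HasDerivWithinAt (fun t => Real.exp (-(q * t)) * y t)
        (Real.exp (-(q * x)) * -(q * 1) * y x + Real.exp (-(q * x)) * rd x) (Ici x) x := by
      intro x hx
      have hE : HasDerivAt (fun t : ℝ => Real.exp (-(q * t))) (Real.exp (-(q * x)) * -(q * 1)) x :=
        (((hasDerivAt_id x).const_mul q).neg).exp
      exact (hE.hasDerivWithinAt).mul (hyr x hx)
    have hBd : ∀ x : ℝ, HasDerivAt (fun t => Real.exp (-(q * a)) * y a +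
        (rd a - q * y a) * Real.exp (q * a) / (2 * q) *
          (Real.exp (-(2 * q * a)) - Real.exp (-(2 * q * t))))
        ((rd a - q * y a) * Real.exp (q * a) * Real.exp (-(2 * q * x))) x := by
      intro x
      have h1 : HasDerivAt (fun t : ℝ => Real.exp (-(2 * q * t)))
          (Real.exp (-(2 * q * x)) * -(2 * q * 1)) x :=
        (((hasDerivAt_id x).const_mul (2 * q)).neg).exp
      have h2 := ((h1.const_sub (Real.exp (-(2 * q * a)))).const_mul
        ((rd a - q * y a) * Real.exp (q * a) / (2 * q))).const_add (Real.exp (-(q * a)) * y a)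
      refine h2.congr_deriv ?_
      field_simp
    have bound : ∀ x ∈ Ico a b,
        Real.exp (-(q * x)) * -(q * 1) * y x + Real.exp (-(q * x)) * rd x ≤
          (rd a - q * y a) * Real.exp (q * a) * Real.exp (-(2 * q * x)) := by
      intro x hx
      have e1 : Real.exp (-(q * x)) = Real.exp (-(2 * q * x)) * Real.exp (q * x) := by
        rw [← Real.exp_add]; congr 1; ring
      have e2 : Real.exp (q * x) * (rd x - q * y x) ≤ Real.exp (q * a) * (rd a - q * y a) := by
        rcases eq_or_lt_of_le hx.1 with rfl | hax
        · exact le_rfl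
        · exact E1 x ⟨hax, hx.2⟩
      calc Real.exp (-(q * x)) * -(q * 1) * y x + Real.exp (-(q * x)) * rd x
          = Real.exp (-(2 * q * x)) * (Real.exp (q * x) * (rd x - q * y x)) := by rw [e1]; ring
        _ ≤ Real.exp (-(2 * q * x)) * (Real.exp (q * a) * (rd a - q * y a)) :=
            mul_le_mul_of_nonneg_left e2 (Real.exp_pos _).le
        _ = (rd a - q * y a) * Real.exp (q * a) * Real.exp (-(2 * q * x)) := by ring
    intro t htm
    refine image_le_of_deriv_right_le_deriv_boundary hfc hf' (le_of_eq (by simp))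
      (fun x _ => (hBd x).continuousAt.continuousWithinAt)
      (fun x _ => (hBd x).hasDerivWithinAt) bound htm
  -- conclusion (i)
  have hyA : ∀ t ∈ Icc a b,
      y t ≤ Real.cosh (q * (t - a)) * y a + 1 / q * Real.sinh (q * (t - a)) * rd a := by
    intro t htm
    have h1 := hfle t htm
    have e0 : Real.exp (q * t) * Real.exp (-(q * t)) = 1 := by
      rw [← Real.exp_add]; simp
    have h2 : y t ≤ Real.exp (q * t) *
        (Real.exp (-(q * a)) * y a + (rd a - q * y a) * Real.exp (q * a) / (2 * q) *
          (Real.exp (-(2 * q * a)) - Real.exp (-(2 * q * t)))) := by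
      calc y t = Real.exp (q * t) * (Real.exp (-(q * t)) * y t) := by
            rw [← mul_assoc, e0, one_mul]
        _ ≤ _ := mul_le_mul_of_nonneg_left h1 (Real.exp_pos _).le
    have hid : Real.exp (q * t) *
        (Real.exp (-(q * a)) * y a + (rd a - q * y a) * Real.exp (q * a) / (2 * q) *
          (Real.exp (-(2 * q * a)) - Real.exp (-(2 * q * t)))) =
        Real.cosh (q * (t - a)) * y a + 1 / q * Real.sinh (q * (t - a)) * rd a := by
      have h4 : Real.exp (q * (t - a)) = Real.exp (q * t) * (Real.exp (q * a))⁻¹ := by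
        rw [← Real.exp_neg, ← Real.exp_add]; congr 1; ring
      have h5 : Real.exp (-(q * (t - a))) = Real.exp (q * a) * (Real.exp (q * t))⁻¹ := by
        rw [← Real.exp_neg, ← Real.exp_add]; congr 1; ring
      have h2a : Real.exp (-(2 * q * a)) = (Real.exp (q * a))⁻¹ * (Real.exp (q * a))⁻¹ := by
        rw [← Real.exp_neg, ← Real.exp_add]; congr 1; ring
      have h2t : Real.exp (-(2 * q * t)) = (Real.exp (q * t))⁻¹ * (Real.exp (q * t))⁻¹ := by
        rw [← Real.exp_neg, ← Real.exp_add]; congr 1; ring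
      have h1a : Real.exp (-(q * a)) = (Real.exp (q * a))⁻¹ := Real.exp_neg _
      rw [Real.cosh_eq, Real.sinh_eq, h4, h5, h2a, h2t, h1a]
      field_simp
      ring
    rw [hid] at h2
    exact h2
  refine ⟨hyA, ?_⟩
  -- the invariant rd t ≤ A' t on (a, b)
  have Inv : ∀ t ∈ Ioo a b,
      rd t ≤ q * Real.sinh (q * (t - a)) * y a + Real.cosh (q * (t - a)) * rd a := by
    intro t ht
    have h1 := E1 t ht
    have h2 := hyA t (Ioo_subset_Icc_self ht)
    have key1 : Real.cosh (q * (t - a)) - Real.sinh (q * (t - a)) =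
        Real.exp (-(q * (t - a))) := by
      rw [Real.cosh_eq, Real.sinh_eq]; ring
    have hexp1 : Real.exp (q * t) * Real.exp (-(q * (t - a))) = Real.exp (q * a) := by
      rw [← Real.exp_add]; congr 1; ring
    have hp : (0:ℝ) < Real.exp (q * t) := Real.exp_pos _
    have h3 : rd t - q * y t ≤ Real.exp (-(q * (t - a))) * (rd a - q * y a) := by
      have h1' : Real.exp (q * t) * (rd t - q * y t) ≤
          Real.exp (q * t) * (Real.exp (-(q * (t - a))) * (rd a - q * y a)) := by
        rw [← mul_assoc, hexp1]; exact h1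
      exact (mul_le_mul_iff_right₀ hp).1 h1'
    have h4 : q * y t ≤ q * (Real.cosh (q * (t - a)) * y a +
        1 / q * Real.sinh (q * (t - a)) * rd a) := mul_le_mul_of_nonneg_left h2 hq.le
    have h5 : rd t ≤ q * (Real.cosh (q * (t - a)) * y a +
        1 / q * Real.sinh (q * (t - a)) * rd a) +
        (Real.cosh (q * (t - a)) - Real.sinh (q * (t - a))) * (rd a - q * y a) := by
      rw [key1]; linarith
    have h6 : ∀ C S : ℝ, q * (C * y a + 1 / q * S * rd a) + (C - S) * (rd a - q * y a) =
        q * S * y a + C * rd a := by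
      intro C S; field_simp; ring
    rw [h6] at h5
    exact h5
  -- derivative of A'
  have hgd : ∀ x : ℝ, HasDerivAt
      (fun t => q * Real.sinh (q * (t - a)) * y a + Real.cosh (q * (t - a)) * rd a)
      (q * (Real.cosh (q * (x - a)) * (q * 1)) * y a +
        Real.sinh (q * (x - a)) * (q * 1) * rd a) x := by
    intro x
    have hu : HasDerivAt (fun t : ℝ => q * (t - a)) (q * 1) x :=
      ((hasDerivAt_id x).sub_const a).const_mul q
    exact (((hu.sinh.const_mul q).mul_const (y a)).add (hu.cosh.mul_const (rd a)))
  -- a bound for the negative of c * A on [a, b]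
  obtain ⟨z₀, hz₀, hz₀max⟩ := isCompact_Icc.exists_isMaxOn (s := Icc a b)
    (nonempty_Icc.2 hab.le)
    (f := fun t => -(q * (Real.cosh (q * (t - a)) * (q * 1)) * y a +
      Real.sinh (q * (t - a)) * (q * 1) * rd a))
    (by fun_prop)
  set N : ℝ := max (-(q * (Real.cosh (q * (z₀ - a)) * (q * 1)) * y a +
      Real.sinh (q * (z₀ - a)) * (q * 1) * rd a)) 0 with hN
  have hN0 : 0 ≤ N := le_max_right _ _
  have hNb : ∀ t ∈ Icc a b, 0 ≤ q * (Real.cosh (q * (t - a)) * (q * 1)) * y a +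
      Real.sinh (q * (t - a)) * (q * 1) * rd a + N := by
    intro t ht
    have := hz₀max ht
    simp only [Set.mem_setOf_eq] at this
    have h7 : -(q * (Real.cosh (q * (t - a)) * (q * 1)) * y a +
        Real.sinh (q * (t - a)) * (q * 1) * rd a) ≤ N := le_max_of_le_left this
    linarith
  have hk : MonotoneOn (fun t => (q * Real.sinh (q * (t - a)) * y a +
      Real.cosh (q * (t - a)) * rd a) + N * t) (Icc a b) := by
    apply monotoneOn_of_hasDerivWithinAt_nonneg (convex_Icc a b)
      (f' := fun x => (q * (Real.cosh (q * (x - a)) * (q * 1)) * y a +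
        Real.sinh (q * (x - a)) * (q * 1) * rd a) + N * 1)
    · exact fun t _ => (((hgd t).add ((hasDerivAt_id t).const_mul N)).continuousAt).continuousWithinAt
    · rw [interior_Icc]
      intro x hx
      exact (((hgd x).add ((hasDerivAt_id x).const_mul N))).hasDerivWithinAt
    · rw [interior_Icc]
      intro x hx
      have := hNb x (Ioo_subset_Icc_self hx)
      linarith
  -- last step : bound the left derivative at b
  intro ldb hldb
  have hslopet := hasDerivWithinAt_iff_tendsto_slope.1 hldb
  rw [Iic_diff_right] at hslopet
  have hev : ∀ᶠ s in 𝓝[<] b, slope y b s ≤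
      (q * Real.sinh (q * (b - a)) * y a + Real.cosh (q * (b - a)) * rd a) + N * (b - s) := by
    filter_upwards [Ioo_mem_nhdsLT hab] with s hs
    obtain ⟨ξ, hξ, hξs⟩ := exists_hasDerivAt_eq_slope y rd hs.2
      (hcont.mono (Icc_subset_Icc hs.1.le le_rfl))
      (fun x hx => (hC2 x ⟨hs.1.trans hx.1, hx.2⟩).1)
    have hξab : ξ ∈ Ioo a b := ⟨hs.1.trans hξ.1, hξ.2⟩
    have h1 : rd ξ ≤ q * Real.sinh (q * (ξ - a)) * y a + Real.cosh (q * (ξ - a)) * rd a :=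
      Inv ξ hξab
    have h2 : (q * Real.sinh (q * (ξ - a)) * y a + Real.cosh (q * (ξ - a)) * rd a) + N * ξ ≤
        (q * Real.sinh (q * (b - a)) * y a + Real.cosh (q * (b - a)) * rd a) + N * b :=
      hk ⟨hξab.1.le, hξab.2.le⟩ ⟨hab.le, le_rfl⟩ hξab.2.le
    have h3 : slope y b s = (y b - y s) / (b - s) := by rw [slope_comm, slope_def_field]
    have h4 : N * (b - ξ) ≤ N * (b - s) := mul_le_mul_of_nonneg_left (by linarith [hξ.1]) hN0
    rw [h3, ← hξs]
    linarith
  have hlim : Tendsto (fun s => (q * Real.sinh (q * (b - a)) * y a +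
      Real.cosh (q * (b - a)) * rd a) + N * (b - s)) (𝓝[<] b)
      (𝓝 ((q * Real.sinh (q * (b - a)) * y a + Real.cosh (q * (b - a)) * rd a) + N * (b - b))) :=
    ((continuous_const.add (continuous_const.mul (continuous_const.sub continuous_id))).tendsto b).mono_left
      nhdsWithin_le_nhds
  have hfin := le_of_tendsto_of_tendsto hslopet hlim hev
  simpa using hfin


/-- Lemma 3.7: a one-dimensional differential inequality comparison for
continuous piecewise-C² functions whose right derivative jumps down at the
breakpoints. Here `rd t` and `ld t` are the one-sided derivatives `ẏ(t+)`
and `ẏ(t−)`, and away from the finitely many breakpoints `F` the function is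
twice differentiable with `ÿ(t) ≤ c y(t)`. -/
theorem piecewise_ode_comparison
    (T c : ℝ) (hT : 0 < T) (hc : 0 < c)
    (y rd ld : ℝ → ℝ)
    (F : Finset ℝ) (hF : (↑F : Set ℝ) ⊆ Ioo 0 T)
    (hcont : ContinuousOn y (Ico 0 T))
    -- one-sided derivatives
    (hrd : ∀ t ∈ Ico (0:ℝ) T, HasDerivWithinAt y (rd t) (Ici t) t)
    (hld : ∀ t ∈ Ioo (0:ℝ) T, HasDerivWithinAt y (ld t) (Iic t) t)
    -- ẏ(t+) ≤ ẏ(t−) for t ∈ (0,T)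
    (hslope : ∀ t ∈ Ioo (0:ℝ) T, rd t ≤ ld t)
    -- piecewise C² with ÿ(t) ≤ c y(t) away from F
    (hC2 : ∀ t ∈ Ioo (0:ℝ) T, t ∉ F →
      HasDerivAt y (rd t) t ∧ ∃ d : ℝ, HasDerivAt rd d t ∧ d ≤ c * y t) :
    ∀ t ∈ Ico (0:ℝ) T,
      y t ≤ Real.cosh (Real.sqrt c * t) * y 0 +
        (1 / Real.sqrt c) * Real.sinh (Real.sqrt c * t) * rd 0 := by
  set q := Real.sqrt c with hqdef
  have hq : 0 < q := Real.sqrt_pos.2 hc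
  have hq2 : q ^ 2 = c := Real.sq_sqrt hc.le
  have step : ∀ a t : ℝ, 0 ≤ a → a < t → t < T →
      (∀ s ∈ F, ¬(a < s ∧ s < t)) →
      y a ≤ Real.cosh (q * a) * y 0 + 1 / q * Real.sinh (q * a) * rd 0 →
      rd a ≤ q * Real.sinh (q * a) * y 0 + Real.cosh (q * a) * rd 0 →
      (y t ≤ Real.cosh (q * t) * y 0 + 1 / q * Real.sinh (q * t) * rd 0 ∧
        rd t ≤ q * Real.sinh (q * t) * y 0 + Real.cosh (q * t) * rd 0) := by
    intro a t ha hat htT hgap hya hrda'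
    have htpos : 0 < t := lt_of_le_of_lt ha hat
    obtain ⟨h1, h2⟩ := key_interval c q a t hc hq hq2 y rd hat
      (hcont.mono (fun x hx => ⟨ha.trans hx.1, lt_of_le_of_lt hx.2 htT⟩))
      (hrd a ⟨ha, hat.trans htT⟩)
      (fun u hu => hC2 u ⟨lt_of_le_of_lt ha hu.1, hu.2.trans htT⟩
        (fun hmem => hgap u hmem ⟨hu.1, hu.2⟩))
    have hcosh : (0:ℝ) ≤ Real.cosh (q * (t - a)) := (Real.cosh_pos _).le
    have hsinh : 0 ≤ Real.sinh (q * (t - a)) :=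
      Real.sinh_nonneg_iff.2 (mul_nonneg hq.le (by linarith))
    have zflow : Real.cosh (q * (t - a)) *
          (Real.cosh (q * a) * y 0 + 1 / q * Real.sinh (q * a) * rd 0) +
        1 / q * Real.sinh (q * (t - a)) *
          (q * Real.sinh (q * a) * y 0 + Real.cosh (q * a) * rd 0) =
        Real.cosh (q * t) * y 0 + 1 / q * Real.sinh (q * t) * rd 0 := by
      rw [show q * t = q * (t - a) + q * a by ring, Real.cosh_add, Real.sinh_add]
      field_simp
      ring
    have z'flow : q * Real.sinh (q * (t - a)) *
          (Real.cosh (q * a) * y 0 + 1 / q * Real.sinh (q * a) * rd 0) +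
        Real.cosh (q * (t - a)) *
          (q * Real.sinh (q * a) * y 0 + Real.cosh (q * a) * rd 0) =
        q * Real.sinh (q * t) * y 0 + Real.cosh (q * t) * rd 0 := by
      rw [show q * t = q * (t - a) + q * a by ring, Real.cosh_add, Real.sinh_add]
      field_simp
      ring
    constructor
    · calc y t ≤ Real.cosh (q * (t - a)) * y a + 1 / q * Real.sinh (q * (t - a)) * rd a :=
            h1 t ⟨hat.le, le_rfl⟩
        _ ≤ Real.cosh (q * (t - a)) *
              (Real.cosh (q * a) * y 0 + 1 / q * Real.sinh (q * a) * rd 0) +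
            1 / q * Real.sinh (q * (t - a)) *
              (q * Real.sinh (q * a) * y 0 + Real.cosh (q * a) * rd 0) :=
            add_le_add (mul_le_mul_of_nonneg_left hya hcosh)
              (mul_le_mul_of_nonneg_left hrda' (mul_nonneg (by positivity) hsinh))
        _ = _ := zflow
    · calc rd t ≤ ld t := hslope t ⟨htpos, htT⟩
        _ ≤ q * Real.sinh (q * (t - a)) * y a + Real.cosh (q * (t - a)) * rd a :=
            h2 (ld t) (hld t ⟨htpos, htT⟩)
        _ ≤ q * Real.sinh (q * (t - a)) *
              (Real.cosh (q * a) * y 0 + 1 / q * Real.sinh (q * a) * rd 0) +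
            Real.cosh (q * (t - a)) *
              (q * Real.sinh (q * a) * y 0 + Real.cosh (q * a) * rd 0) :=
            add_le_add (mul_le_mul_of_nonneg_left hya (mul_nonneg hq.le hsinh))
              (mul_le_mul_of_nonneg_left hrda' hcosh)
        _ = _ := z'flow
  have main : ∀ n : ℕ, ∀ t, t ∈ Ico (0:ℝ) T → (F.filter (fun s => s < t)).card ≤ n →
      y t ≤ Real.cosh (q * t) * y 0 + 1 / q * Real.sinh (q * t) * rd 0 ∧
        rd t ≤ q * Real.sinh (q * t) * y 0 + Real.cosh (q * t) * rd 0 := by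
    intro n
    induction n with
    | zero =>
      intro t ht hcard
      rcases eq_or_lt_of_le ht.1 with rfl | htpos
      · constructor <;> simp
      · have hgap : ∀ s ∈ F, ¬(0 < s ∧ s < t) := by
          intro s hs hcon
          have hmem : s ∈ F.filter (fun s => s < t) := Finset.mem_filter.2 ⟨hs, hcon.2⟩
          have := Finset.card_pos.2 ⟨s, hmem⟩
          omega
        exact step 0 t le_rfl htpos ht.2 hgap (by simp) (by simp)
    | succ n ih =>
      intro t ht hcard
      rcases eq_or_lt_of_le ht.1 with rfl | htpos
      · constructor <;> simp
      · by_cases hS : (F.filter (fun s => s < t)).Nonempty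
        · have haF : (F.filter (fun s => s < t)).max' hS ∈ F ∧
              (F.filter (fun s => s < t)).max' hS < t :=
            Finset.mem_filter.1 ((F.filter (fun s => s < t)).max'_mem hS)
          set a := (F.filter (fun s => s < t)).max' hS with hadef
          have haIoo : a ∈ Ioo (0:ℝ) T := hF haF.1
          have hgap : ∀ s ∈ F, ¬(a < s ∧ s < t) := by
            intro s hs hcon
            have hmem : s ∈ F.filter (fun s => s < t) := Finset.mem_filter.2 ⟨hs, hcon.2⟩
            exact absurd (Finset.le_max' _ s hmem) (not_le.2 hcon.1)
          have hsubset : F.filter (fun s => s < a) ⊆ F.filter (fun s => s < t) := by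
            intro x hx
            obtain ⟨hx1, hx2⟩ := Finset.mem_filter.1 hx
            exact Finset.mem_filter.2 ⟨hx1, lt_trans hx2 haF.2⟩
          have hssub : F.filter (fun s => s < a) ⊂ F.filter (fun s => s < t) :=
            (Finset.ssubset_iff_of_subset hsubset).2
              ⟨a, Finset.mem_filter.2 ⟨haF.1, haF.2⟩, by simp [Finset.mem_filter]⟩
          have hcard' : (F.filter (fun s => s < a)).card ≤ n := by
            have := Finset.card_lt_card hssub
            omega
          obtain ⟨hya, hrda⟩ := ih a ⟨haIoo.1.le, haIoo.2⟩ hcard'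
          exact step a t haIoo.1.le haF.2 ht.2 hgap hya hrda
        · have hgap : ∀ s ∈ F, ¬(0 < s ∧ s < t) := by
            intro s hs hcon
            exact hS ⟨s, Finset.mem_filter.2 ⟨hs, hcon.2⟩⟩
          exact step 0 t le_rfl htpos ht.2 hgap (by simp) (by simp)
  intro t ht
  exact (main F.card t ht (Finset.card_filter_le _ _)).1

end
end

section
/- Let v₀: ℝ → ℝ be absolutely continuous and let γ₁,…,γ_N: [0,∞) → ℝ be sticky particle trajectories for distinct initial positions x₁,…,x_N, masses m₁,…,m_N > 0 with Σᵢ mᵢ = 1, initial velocities vᵢ = v₀(xᵢ), and potential W with semiconvexity constant c > 0. Then for all i, j ∈ {1,…,N} with xᵢ ≥ xⱼ and all t ≥ 0, γᵢ(t) − γⱼ(t) ≤ cosh(√c t)(xᵢ − xⱼ) + (1/√c) sinh(√c t) ∫_{xⱼ}^{xᵢ} |v₀'(x)| dx. -/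
open MeasureTheory Real Filter Set Topology

noncomputable section

/-- monotonicity from nonneg derivative, no exceptional points -/
private lemma mono_no_exc {f : ℝ → ℝ} {a b : ℝ} (hab : a ≤ b)
    (hc : ContinuousOn f (Icc a b))
    (hd : ∀ t ∈ Ioo a b, ∃ d, 0 ≤ d ∧ HasDerivAt f d t) : f a ≤ f b := by
  rcases eq_or_lt_of_le hab with rfl | hab'
  · exact le_rfl
  have hm := monotoneOn_of_deriv_nonneg (convex_Icc a b) hc
      (fun t ht => by
        rw [interior_Icc] at ht
        obtain ⟨d, _, hdt⟩ := hd t ht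
        exact hdt.differentiableAt.differentiableWithinAt)
      (fun t ht => by
        rw [interior_Icc] at ht
        obtain ⟨d, hd0, hdt⟩ := hd t ht
        rw [hdt.deriv]; exact hd0)
  exact hm (left_mem_Icc.2 hab) (right_mem_Icc.2 hab) hab

/-- monotonicity from nonneg derivative off a finite exceptional set -/
private lemma mono_off_finite (S : Finset ℝ) {f : ℝ → ℝ} {a b : ℝ} (hab : a ≤ b)
    (hc : ContinuousOn f (Icc a b))
    (hd : ∀ t ∈ Ioo a b, t ∉ S → ∃ d, 0 ≤ d ∧ HasDerivAt f d t) : f a ≤ f b := by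
  induction S using Finset.strongInduction generalizing a b with
  | _ S ih =>
    by_cases h : ∃ u ∈ S, u ∈ Ioo a b
    · obtain ⟨u, huS, hu⟩ := h
      have h1 : f a ≤ f u :=
        ih (S.erase u) (Finset.erase_ssubset huS) hu.1.le
          (hc.mono (Icc_subset_Icc le_rfl hu.2.le))
          (fun t ht htS => hd t ⟨ht.1, ht.2.trans hu.2⟩
            (fun htS' => htS (Finset.mem_erase.2 ⟨ne_of_lt ht.2, htS'⟩)))
      have h2 : f u ≤ f b :=
        ih (S.erase u) (Finset.erase_ssubset huS) hu.2.le
          (hc.mono (Icc_subset_Icc hu.1.le le_rfl))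
          (fun t ht htS => hd t ⟨hu.1.trans ht.1, ht.2⟩
            (fun htS' => htS (Finset.mem_erase.2 ⟨(ne_of_gt ht.1), htS'⟩)))
      exact h1.trans h2
    · push_neg at h
      exact mono_no_exc hab hc (fun t ht => hd t ht (fun htS => h t htS ht))

/-- left derivative of a nonneg function vanishing at the right endpoint is nonpositive -/
private lemma left_deriv_nonpos {h : ℝ → ℝ} {L t : ℝ} (ht : 0 < t)
    (hD : HasDerivWithinAt h L (Iic t) t)
    (hpos : ∀ s, 0 ≤ s → s ≤ t → 0 ≤ h s) (h0 : h t = 0) : L ≤ 0 := by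
  rw [hasDerivWithinAt_iff_tendsto_slope] at hD
  have hset : Iic t \ {t} = Iio t := by
    ext s; simp [lt_iff_le_and_ne]
  rw [hset] at hD
  have hev : ∀ᶠ s in 𝓝[Iio t] t, slope h t s ≤ 0 := by
    filter_upwards [self_mem_nhdsWithin,
      eventually_nhdsWithin_of_eventually_nhds (eventually_gt_nhds ht)] with s hs hs0
    have hst : s < t := hs
    have : slope h t s = h s / (s - t) := by
      rw [slope_def_field, h0]; ring_nf
    rw [this]
    exact div_nonpos_of_nonneg_of_nonpos (hpos s hs0.le hst.le) (by linarith)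
  exact le_of_tendsto hD hev

def GoodPred {N : ℕ} (x : Fin N → ℝ) (γ dd : Fin N → ℝ → ℝ) (r : ℝ) (Φ : ℝ → ℝ) (t : ℝ) : Prop :=
  ∀ k l : Fin N, x l ≤ x k →
    dd k t - dd l t + r * (γ k t - γ l t) ≤ Real.exp (r * t) * (Φ (x k) - Φ (x l))

/-- Step across an exceptional time, using momentum averaging (condition (d)). -/
private lemma stepB {N : ℕ} {x m : Fin N → ℝ} {γ rd ld : Fin N → ℝ → ℝ} {r : ℝ} {Φ : ℝ → ℝ}
    (hΦ : Monotone Φ) (hm : ∀ i, 0 < m i)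
    (horder : ∀ k l, x l ≤ x k → ∀ t : ℝ, 0 ≤ t → γ l t ≤ γ k t)
    (hld : ∀ i, ∀ t : ℝ, 0 < t → HasDerivWithinAt (γ i) (ld i t) (Iic t) t)
    (hcoll : ∀ t : ℝ, 0 < t → ∀ I : Finset (Fin N), I.Nonempty →
      (∀ i ∈ I, ∀ j ∈ I, γ i t = γ j t) →
      (∀ i, i ∉ I → ∀ j ∈ I, γ i t ≠ γ j t) →
      ∀ j ∈ I, rd j t = (∑ i ∈ I, m i * ld i t) / ∑ i ∈ I, m i)
    {t : ℝ} (ht : 0 < t) (hG : GoodPred x γ ld r Φ t) : GoodPred x γ rd r Φ t := by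
  classical
  intro k l hxlk
  set I := Finset.univ.filter (fun p => γ p t = γ k t) with hI
  set J := Finset.univ.filter (fun q => γ q t = γ l t) with hJ
  have hkI : k ∈ I := by simp [hI]
  have hlJ : l ∈ J := by simp [hJ]
  have hmemI : ∀ p, p ∈ I ↔ γ p t = γ k t := by intro p; simp [hI]
  have hmemJ : ∀ q, q ∈ J ↔ γ q t = γ l t := by intro q; simp [hJ]
  have havgI : rd k t = (∑ q ∈ I, m q * ld q t) / ∑ q ∈ I, m q := by
    refine hcoll t ht I ⟨k, hkI⟩ ?_ ?_ k hkI
    · intro p hp q hq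
      rw [hmemI] at hp hq; rw [hp, hq]
    · intro p hp q hq
      rw [hmemI] at hq
      rw [hq]
      exact fun hc => hp ((hmemI p).2 hc)
  have havgJ : rd l t = (∑ q ∈ J, m q * ld q t) / ∑ q ∈ J, m q := by
    refine hcoll t ht J ⟨l, hlJ⟩ ?_ ?_ l hlJ
    · intro p hp q hq
      rw [hmemJ] at hp hq; rw [hp, hq]
    · intro p hp q hq
      rw [hmemJ] at hq
      rw [hq]
      exact fun hc => hp ((hmemJ p).2 hc)
  by_cases hkl : γ k t = γ l t
  · have hIJ : I = J := by
      ext p; rw [hmemI, hmemJ, hkl]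
    have hrdkl : rd k t = rd l t := by rw [havgI, havgJ, hIJ]
    have h1 : 0 ≤ exp (r * t) * (Φ (x k) - Φ (x l)) :=
      mul_nonneg (exp_pos _).le (sub_nonneg.2 (hΦ hxlk))
    rw [hrdkl, hkl]
    linarith
  · have hlt : γ l t < γ k t := lt_of_le_of_ne (horder k l hxlk t ht.le) (Ne.symm hkl)
    set κ := exp (r * t) * (Φ (x k) - Φ (x l)) - r * (γ k t - γ l t) with hκ
    have hpq : ∀ p ∈ I, ∀ q ∈ J, ld p t - ld q t ≤ κ := by
      intro p hp q hq
      have hpk : γ p t = γ k t := (hmemI p).1 hp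
      have hql : γ q t = γ l t := (hmemJ q).1 hq
      -- choose representative p'
      obtain ⟨p', hp', hxp', hldp⟩ : ∃ p', p' ∈ I ∧ x p' ≤ x k ∧ ld p t ≤ ld p' t := by
        by_cases hxp : x p ≤ x k
        · exact ⟨p, hp, hxp, le_rfl⟩
        · refine ⟨k, hkI, le_rfl, ?_⟩
          have hxkp : x k ≤ x p := (not_le.1 hxp).le
          have : ld p t - ld k t ≤ 0 := by
            refine left_deriv_nonpos ht ((hld p t ht).sub (hld k t ht)) ?_ ?_
            · intro s hs0 hst
              exact sub_nonneg.2 (horder p k hxkp s hs0)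
            · simp [hpk]
          linarith
      obtain ⟨q', hq', hxq', hldq⟩ : ∃ q', q' ∈ J ∧ x l ≤ x q' ∧ ld q' t ≤ ld q t := by
        by_cases hxq : x l ≤ x q
        · exact ⟨q, hq, hxq, le_rfl⟩
        · refine ⟨l, hlJ, le_rfl, ?_⟩
          have hxql : x q ≤ x l := (not_le.1 hxq).le
          have : ld l t - ld q t ≤ 0 := by
            refine left_deriv_nonpos ht ((hld l t ht).sub (hld q t ht)) ?_ ?_
            · intro s hs0 hst
              exact sub_nonneg.2 (horder l q hxql s hs0)
            · simp [hql]
          linarith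
      have hp'k : γ p' t = γ k t := (hmemI p').1 hp'
      have hq'l : γ q' t = γ l t := (hmemJ q').1 hq'
      have hxq'p' : x q' ≤ x p' := by
        by_contra hcon
        have : γ p' t ≤ γ q' t := horder q' p' (not_le.1 hcon).le t ht.le
        rw [hp'k, hq'l] at this
        exact absurd this (not_le.2 hlt)
      have hGL := hG p' q' hxq'p'
      rw [hp'k, hq'l] at hGL
      have hΦle : Φ (x p') - Φ (x q') ≤ Φ (x k) - Φ (x l) :=
        sub_le_sub (hΦ hxp') (hΦ hxq')
      have : exp (r * t) * (Φ (x p') - Φ (x q')) ≤ exp (r * t) * (Φ (x k) - Φ (x l)) :=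
        mul_le_mul_of_nonneg_left hΦle (exp_pos _).le
      rw [hκ]; linarith
    -- averaging
    have hMI : 0 < ∑ q ∈ I, m q := Finset.sum_pos (fun q _ => hm q) ⟨k, hkI⟩
    have hMJ : 0 < ∑ q ∈ J, m q := Finset.sum_pos (fun q _ => hm q) ⟨l, hlJ⟩
    have hkey : rd k t - rd l t ≤ κ := by
      rw [havgI, havgJ, div_sub_div _ _ (ne_of_gt hMI) (ne_of_gt hMJ),
        div_le_iff₀ (mul_pos hMI hMJ)]
      have e1 : (∑ q ∈ I, m q * ld q t) * ∑ q ∈ J, m q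
          - (∑ q ∈ I, m q) * ∑ q ∈ J, m q * ld q t
          = ∑ p ∈ I, ∑ q ∈ J, (m p * m q) * (ld p t - ld q t) := by
        rw [Finset.sum_mul_sum I J (fun q => m q * ld q t) m]
        rw [Finset.sum_mul_sum I J m (fun q => m q * ld q t)]
        rw [← Finset.sum_sub_distrib]
        refine Finset.sum_congr rfl (fun p _ => ?_)
        rw [← Finset.sum_sub_distrib]
        refine Finset.sum_congr rfl (fun q _ => ?_)
        ring
      rw [e1]
      calc ∑ p ∈ I, ∑ q ∈ J, (m p * m q) * (ld p t - ld q t)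
          ≤ ∑ p ∈ I, ∑ q ∈ J, (m p * m q) * κ := by
            refine Finset.sum_le_sum (fun p hp => Finset.sum_le_sum (fun q hq => ?_))
            exact mul_le_mul_of_nonneg_left (hpq p hp q hq)
              (mul_pos (hm p) (hm q)).le
        _ = κ * ((∑ q ∈ I, m q) * ∑ q ∈ J, m q) := by
            rw [Finset.sum_mul_sum]
            rw [Finset.mul_sum]
            refine Finset.sum_congr rfl (fun p _ => ?_)
            rw [Finset.mul_sum]
            refine Finset.sum_congr rfl (fun q _ => ?_)
            ring
    rw [hκ] at hkey
    linarith

/-- Propagation of the invariant across an F-free open interval. -/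
private lemma piece {N : ℕ} {x m : Fin N → ℝ} {γ rd ld : Fin N → ℝ → ℝ} {W : ℝ → ℝ}
    {c r K : ℝ} {F : Finset ℝ} {Φ : ℝ → ℝ}
    (hrc : r * r = c)
    (hcont : ∀ i, ContinuousOn (γ i) (Ici (0:ℝ)))
    (hrdW : ∀ i, ∀ t : ℝ, 0 ≤ t → HasDerivWithinAt (γ i) (rd i t) (Ici t) t)
    (hldW : ∀ i, ∀ t : ℝ, 0 < t → HasDerivWithinAt (γ i) (ld i t) (Iic t) t)
    (hnewt : ∀ i, ∀ t : ℝ, 0 < t → t ∉ F →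
      HasDerivAt (γ i) (rd i t) t ∧
      HasDerivAt (rd i) (-∑ j, m j * deriv W (γ i t - γ j t)) t)
    (hK0 : 0 ≤ K) (hK : ∀ z, |deriv W z| ≤ K * (1 + |z|))
    (hWc : ∀ u u' : ℝ, u' ≤ u → deriv W u' - deriv W u ≤ c * (u - u'))
    (hm : ∀ i, 0 < m i) (hsum : ∑ i, m i = 1)
    (horder : ∀ k l, x l ≤ x k → ∀ t : ℝ, 0 ≤ t → γ l t ≤ γ k t)
    {a b : ℝ} (ha : 0 ≤ a) (hab : a < b) (hfree : ∀ u ∈ Ioo a b, u ∉ F)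
    (hGa : GoodPred x γ rd r Φ a) :
    (∀ t ∈ Ioo a b, GoodPred x γ rd r Φ t) ∧ GoodPred x γ ld r Φ b := by
  have hb0 : 0 < b := lt_of_le_of_lt ha hab
  have hIccIci : Icc a b ⊆ Ici (0:ℝ) := fun s hs => le_trans ha hs.1
  have hγc : ∀ i, ContinuousOn (γ i) (Icc a b) := fun i => (hcont i).mono hIccIci
  have hIoopos : ∀ t ∈ Ioo a b, 0 < t := fun t htm => lt_of_le_of_lt ha htm.1
  -- bound on the trajectories
  have hbd : ∀ i : Fin N, ∃ C : ℝ, ∀ s ∈ Icc a b, |γ i s| ≤ C := by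
    intro i
    obtain ⟨C, hC⟩ := (isCompact_Icc).exists_bound_of_continuousOn (hγc i)
    exact ⟨C, fun s hs => by simpa [Real.norm_eq_abs] using hC s hs⟩
  choose C hC using hbd
  set S : ℝ := ∑ q, |C q| with hS
  have hS0 : 0 ≤ S := Finset.sum_nonneg (fun q _ => abs_nonneg _)
  have hCS : ∀ i, C i ≤ S :=
    fun i => le_trans (le_abs_self _)
      (Finset.single_le_sum (f := fun q => |C q|) (fun q _ => abs_nonneg _) (Finset.mem_univ i))
  set M : ℝ := K * (1 + 2 * S) with hM
  have hforce : ∀ i, ∀ s ∈ Icc a b, |(-∑ q, m q * deriv W (γ i s - γ q s))| ≤ M := by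
    intro i s hs
    rw [abs_neg]
    calc |∑ q, m q * deriv W (γ i s - γ q s)|
        ≤ ∑ q, |m q * deriv W (γ i s - γ q s)| := Finset.abs_sum_le_sum_abs _ _
      _ ≤ ∑ q, m q * (K * (1 + 2 * S)) := by
          refine Finset.sum_le_sum (fun q _ => ?_)
          rw [abs_mul, abs_of_pos (hm q)]
          refine mul_le_mul_of_nonneg_left ?_ (hm q).le
          refine le_trans (hK _) ?_
          have h1 : |γ i s - γ q s| ≤ 2 * S := by
            have := hC i s hs
            have := hC q s hs
            have h3 := hCS i
            have h4 := hCS q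
            have := abs_sub (γ i s) (γ q s)
            calc |γ i s - γ q s| ≤ |γ i s| + |γ q s| := abs_sub _ _
              _ ≤ 2 * S := by linarith [hC i s hs, hC q s hs]
          have : (1:ℝ) + |γ i s - γ q s| ≤ 1 + 2 * S := by linarith
          exact mul_le_mul_of_nonneg_left this hK0
      _ = M := by rw [← Finset.sum_mul, hsum, one_mul]
  -- rd is Lipschitz on Ioo a b
  have hM0 : 0 ≤ M := mul_nonneg hK0 (by linarith)
  -- each rd i extends to a continuous function on ℝ agreeing on the open piece,
  -- whose endpoint values are the one-sided derivatives of γ i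
  have hext : ∀ i : Fin N, ∃ g : ℝ → ℝ, Continuous g ∧
      (∀ t ∈ Ioo a b, g t = rd i t) ∧
      (∀ t ∈ Ioo a b, HasDerivAt g (-∑ j, m j * deriv W (γ i t - γ j t)) t) ∧
      g a = rd i a ∧ g b = ld i b := by
    intro i
    -- Lipschitz bound on rd i over Ioo a b
    have hlipIneq : ∀ s t' : ℝ, s ∈ Ioo a b → t' ∈ Ioo a b → s ≤ t' →
        |rd i t' - rd i s| ≤ M * (t' - s) := by
      intro s t' hs ht' hst
      have hsub : Icc s t' ⊆ Ioo a b := fun τ hτ => ⟨lt_of_lt_of_le hs.1 hτ.1, lt_of_le_of_lt hτ.2 ht'.2⟩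
      have hcrd : ContinuousOn (rd i) (Icc s t') := by
        intro τ hτ
        have hτm := hsub hτ
        exact ((hnewt i τ (hIoopos τ hτm) (hfree τ hτm)).2.differentiableAt.continuousAt).continuousWithinAt
      have h1 : rd i t' - rd i s ≤ M * (t' - s) := by
        have := mono_no_exc (f := fun τ => M * τ - rd i τ) hst
          (by
            refine (continuousOn_const.mul continuousOn_id).sub hcrd)
          (by
            intro τ hτ
            have hτm := hsub (Ioo_subset_Icc_self hτ)
            refine ⟨M - (-∑ j, m j * deriv W (γ i τ - γ j τ)), ?_, ?_⟩
            · have := hforce i τ (Ioo_subset_Icc_self (hsub (Ioo_subset_Icc_self hτ)) |> fun h => h)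
              have h2 := hforce i τ ⟨(hτm.1.le), hτm.2.le⟩
              have h3 := (abs_le.1 h2).2
              linarith
            · exact (((hasDerivAt_id τ).const_mul M).sub (hnewt i τ (hIoopos τ hτm) (hfree τ hτm)).2).congr_deriv (by ring))
        linarith
      have h2 : rd i s - rd i t' ≤ M * (t' - s) := by
        have := mono_no_exc (f := fun τ => M * τ + rd i τ) hst
          (by
            refine (continuousOn_const.mul continuousOn_id).add hcrd)
          (by
            intro τ hτ
            have hτm := hsub (Ioo_subset_Icc_self hτ)
            refine ⟨M + (-∑ j, m j * deriv W (γ i τ - γ j τ)), ?_, ?_⟩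
            · have h2 := hforce i τ ⟨(hτm.1.le), hτm.2.le⟩
              have h3 := (abs_le.1 h2).1
              linarith
            · exact (((hasDerivAt_id τ).const_mul M).add (hnewt i τ (hIoopos τ hτm) (hfree τ hτm)).2).congr_deriv (by ring))
        linarith
      rw [abs_le]
      constructor <;> linarith
    have hlip : LipschitzOnWith (Real.toNNReal M) (rd i) (Ioo a b) := by
      rw [lipschitzOnWith_iff_dist_le_mul]
      intro s hs t' ht'
      rw [Real.dist_eq, Real.dist_eq, Real.coe_toNNReal _ hM0]
      rcases le_total t' s with h | h
      · exact (hlipIneq t' s ht' hs h).trans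
          (mul_le_mul_of_nonneg_left (le_abs_self _) hM0)
      · rw [abs_sub_comm (rd i s)]
        refine (hlipIneq s t' hs ht' h).trans
          (mul_le_mul_of_nonneg_left ?_ hM0)
        rw [abs_sub_comm]
        exact le_abs_self _
    obtain ⟨g, hgl, hgeq⟩ := hlip.extend_real
    have hgc : Continuous g := hgl.continuous
    have hgr : ∀ t ∈ Ioo a b, g t = rd i t := fun t htm => (hgeq htm).symm
    -- derivative of g on the open piece
    have hgd : ∀ t ∈ Ioo a b, HasDerivAt g (-∑ j, m j * deriv W (γ i t - γ j t)) t := by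
      intro t htm
      refine ((hnewt i t (hIoopos t htm) (hfree t htm)).2).congr_of_eventuallyEq ?_
      exact Filter.eventuallyEq_of_mem (isOpen_Ioo.mem_nhds htm) (fun y hy => hgr y hy)
    -- primitive of g
    set P : ℝ → ℝ := fun s => γ i a + ∫ u in a..s, g u with hPdef
    have hPd : ∀ s : ℝ, HasDerivAt P (g s) s := by
      intro s
      have := (hgc.integral_hasStrictDerivAt a s).hasDerivAt
      exact this.const_add (γ i a)
    have hPc : Continuous P := continuous_iff_continuousAt.2 fun s => (hPd s).continuousAt
    have hPa : P a = γ i a := by simp [hPdef]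
    have hγP : ∀ s ∈ Icc a b, γ i s = P s := by
      intro s hs
      have hsub2 : Icc a s ⊆ Icc a b := Icc_subset_Icc le_rfl hs.2
      have hsub3 : Ioo a s ⊆ Ioo a b := Ioo_subset_Ioo le_rfl hs.2
      have hder : ∀ τ ∈ Ioo a s, HasDerivAt (fun τ => γ i τ - P τ) 0 τ := by
        intro τ hτ
        have hτm := hsub3 hτ
        have hγd : HasDerivAt (γ i) (rd i τ) τ := (hnewt i τ (hIoopos τ hτm) (hfree τ hτm)).1
        have := hγd.sub (hPd τ)
        rwa [← hgr τ hτm, sub_self] at this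
      have h1 : γ i a - P a ≤ γ i s - P s :=
        mono_no_exc hs.1 (((hγc i).mono hsub2).sub (hPc.continuousOn))
          (fun τ hτ => ⟨0, le_rfl, hder τ hτ⟩)
      have h2 : P a - γ i a ≤ P s - γ i s :=
        mono_no_exc hs.1 ((hPc.continuousOn).sub ((hγc i).mono hsub2))
          (fun τ hτ => ⟨0, le_rfl, by rw [show P - γ i = fun τ => -(γ i τ - P τ) by ext y; simp]; exact (hder τ hτ).neg.congr_deriv neg_zero⟩)
      rw [hPa] at h1 h2
      linarith
    have huD := uniqueDiffOn_Icc hab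
    have hga : g a = rd i a := by
      have hP : HasDerivWithinAt (γ i) (g a) (Icc a b) a :=
        ((hPd a).hasDerivWithinAt).congr (fun y hy => hγP y hy) (hγP a (left_mem_Icc.2 hab.le))
      have hR : HasDerivWithinAt (γ i) (rd i a) (Icc a b) a :=
        (hrdW i a ha).mono Icc_subset_Ici_self
      have h1 := hP.derivWithin (huD a (left_mem_Icc.2 hab.le))
      have h2 := hR.derivWithin (huD a (left_mem_Icc.2 hab.le))
      rw [← h1, ← h2]
    have hgb : g b = ld i b := by
      have hP : HasDerivWithinAt (γ i) (g b) (Icc a b) b :=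
        ((hPd b).hasDerivWithinAt).congr (fun y hy => hγP y hy) (hγP b (right_mem_Icc.2 hab.le))
      have hR : HasDerivWithinAt (γ i) (ld i b) (Icc a b) b :=
        (hldW i b hb0).mono Icc_subset_Iic_self
      have h1 := hP.derivWithin (huD b (right_mem_Icc.2 hab.le))
      have h2 := hR.derivWithin (huD b (right_mem_Icc.2 hab.le))
      rw [← h1, ← h2]
    exact ⟨g, hgc, hgr, hgd, hga, hgb⟩
  choose gf hgcont hgr hgd hga hgb using hext
  -- the Gronwall propagation for each ordered pair
  have main : ∀ k l : Fin N, x l ≤ x k → ∀ t ∈ Icc a b,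
      gf k t - gf l t + r * (γ k t - γ l t) ≤ exp (r * t) * (Φ (x k) - Φ (x l)) := by
    intro k l hxlk t htm
    set A : ℝ → ℝ := fun s => gf k s - gf l s + r * (γ k s - γ l s) with hA
    set u : ℝ → ℝ := fun s => (Φ (x k) - Φ (x l)) - exp (-(r * s)) * A s with hu
    have h0 : u a ≤ u t := by
      refine mono_no_exc htm.1 ?_ ?_
      · have hsub : Icc a t ⊆ Icc a b := Icc_subset_Icc le_rfl htm.2
        refine continuousOn_const.sub (ContinuousOn.mul ?_ ?_)
        · exact (Real.continuous_exp.comp ((continuous_const.mul continuous_id).neg)).continuousOn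
        · exact (((hgcont k).continuousOn.sub (hgcont l).continuousOn).add
            (continuousOn_const.mul (((hγc k).mono hsub).sub ((hγc l).mono hsub))))
      · intro τ hτ
        have hτm : τ ∈ Ioo a b := ⟨hτ.1, lt_of_lt_of_le hτ.2 htm.2⟩
        set fk := -∑ j, m j * deriv W (γ k τ - γ j τ) with hfk
        set fl := -∑ j, m j * deriv W (γ l τ - γ j τ) with hfl
        have hdk := hgd k τ hτm
        have hdl := hgd l τ hτm
        have hγk : HasDerivAt (γ k) (gf k τ) τ := by
          have := (hnewt k τ (hIoopos τ hτm) (hfree τ hτm)).1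
          rwa [← hgr k τ hτm] at this
        have hγl : HasDerivAt (γ l) (gf l τ) τ := by
          have := (hnewt l τ (hIoopos τ hτm) (hfree τ hτm)).1
          rwa [← hgr l τ hτm] at this
        have hAd : HasDerivAt A ((fk - fl) + r * (gf k τ - gf l τ)) τ :=
          (hdk.sub hdl).add ((hγk.sub hγl).const_mul r)
        have hexp : HasDerivAt (fun s : ℝ => exp (-(r * s))) (exp (-(r * τ)) * (-r)) τ := by
          have h1 : HasDerivAt (fun s : ℝ => -(r * s)) (-r) τ := by
            exact ((hasDerivAt_id τ).const_mul r).neg.congr_deriv (by ring)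
          exact h1.exp
        have hud : HasDerivAt u
            (-(exp (-(r * τ)) * (-r) * A τ +
              exp (-(r * τ)) * ((fk - fl) + r * (gf k τ - gf l τ)))) τ :=
          (hexp.mul hAd).const_sub _
        have hyτ : γ l τ ≤ γ k τ := horder k l hxlk τ (hIoopos τ hτm).le
        have hforce_le : fk - fl ≤ c * (γ k τ - γ l τ) := by
          have he1 : fk - fl
              = ∑ j, (m j * deriv W (γ l τ - γ j τ) - m j * deriv W (γ k τ - γ j τ)) := by
            rw [Finset.sum_sub_distrib, hfk, hfl]; ring
          rw [he1]
          calc ∑ j, (m j * deriv W (γ l τ - γ j τ) - m j * deriv W (γ k τ - γ j τ))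
              ≤ ∑ j, m j * (c * (γ k τ - γ l τ)) := by
                refine Finset.sum_le_sum (fun j _ => ?_)
                have := hWc (γ k τ - γ j τ) (γ l τ - γ j τ) (by linarith)
                have h2 : deriv W (γ l τ - γ j τ) - deriv W (γ k τ - γ j τ)
                    ≤ c * (γ k τ - γ l τ) := by
                  have h3 : (γ k τ - γ j τ) - (γ l τ - γ j τ) = γ k τ - γ l τ := by ring
                  rw [h3] at this
                  exact this
                calc m j * deriv W (γ l τ - γ j τ) - m j * deriv W (γ k τ - γ j τ)
                    = m j * (deriv W (γ l τ - γ j τ) - deriv W (γ k τ - γ j τ)) := by ring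
                  _ ≤ m j * (c * (γ k τ - γ l τ)) :=
                      mul_le_mul_of_nonneg_left h2 (hm j).le
            _ = c * (γ k τ - γ l τ) := by rw [← Finset.sum_mul, hsum, one_mul]
        have hA' : (fk - fl) + r * (gf k τ - gf l τ) ≤ r * A τ := by
          have he2 : r * A τ = r * (gf k τ - gf l τ) + c * (γ k τ - γ l τ) := by
            rw [hA]; simp only; rw [← hrc]; ring
          linarith
        refine ⟨_, ?_, hud⟩
        have hepos := (exp_pos (-(r * τ))).le
        calc (0:ℝ) ≤ exp (-(r * τ)) * (r * A τ - ((fk - fl) + r * (gf k τ - gf l τ))) :=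
              mul_nonneg hepos (by linarith)
          _ = -(exp (-(r * τ)) * (-r) * A τ +
              exp (-(r * τ)) * ((fk - fl) + r * (gf k τ - gf l τ))) := by ring
    have hAa : A a = rd k a - rd l a + r * (γ k a - γ l a) := by
      rw [hA]; simp only [hga k, hga l]
    have hua : 0 ≤ u a := by
      have h1 := hGa k l hxlk
      have h2 : exp (-(r * a)) * A a
          ≤ exp (-(r * a)) * (exp (r * a) * (Φ (x k) - Φ (x l))) := by
        refine mul_le_mul_of_nonneg_left ?_ (exp_pos _).le
        rw [hAa]; exact h1
      have h3 : exp (-(r * a)) * (exp (r * a) * (Φ (x k) - Φ (x l)))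
          = Φ (x k) - Φ (x l) := by
        rw [← mul_assoc, ← Real.exp_add]; simp
      rw [hu]; simp only
      linarith
    have h4 : exp (-(r * t)) * A t ≤ Φ (x k) - Φ (x l) := by
      have h5 := le_trans hua h0
      rw [hu] at h5; simp only at h5
      linarith
    calc gf k t - gf l t + r * (γ k t - γ l t) = A t := by rw [hA]
      _ = exp (r * t) * (exp (-(r * t)) * A t) := by
          rw [← mul_assoc, ← Real.exp_add]; simp
      _ ≤ exp (r * t) * (Φ (x k) - Φ (x l)) :=
          mul_le_mul_of_nonneg_left h4 (exp_pos _).le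
  constructor
  · intro t htm k l hxlk
    have := main k l hxlk t (Ioo_subset_Icc_self htm)
    rwa [hgr k t htm, hgr l t htm] at this
  · intro k l hxlk
    have := main k l hxlk b (right_mem_Icc.2 hab.le)
    rwa [hgb k, hgb l] at this


/-- Proposition 3.8 (stability estimate). -/
theorem sticky_particle_stability_estimate
    (N : ℕ) (x m v : Fin N → ℝ) (W : ℝ → ℝ) (c : ℝ)
    (v₀ v₀' : ℝ → ℝ)
    (hv₀'loc : LocallyIntegrable v₀' volume)
    (hv₀ : ∀ a b : ℝ, v₀ b - v₀ a = ∫ z in a..b, v₀' z)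
    (hv : ∀ i, v i = v₀ (x i))
    (hx : Function.Injective x)
    (hm : ∀ i, 0 < m i) (hsum : ∑ i, m i = 1)
    (hW : WHyp W c)
    (γ rd ld : Fin N → ℝ → ℝ)
    (hγ : StickyTrajectories N x m v W γ rd ld) :
    ∀ i j : Fin N, x j ≤ x i → ∀ t : ℝ, 0 ≤ t →
      γ i t - γ j t ≤ Real.cosh (Real.sqrt c * t) * (x i - x j) +
        (1 / Real.sqrt c) * Real.sinh (Real.sqrt c * t) * ∫ z in x j..x i, |v₀' z| := by
  classical
  obtain ⟨hcont, hrdW, hldW, ⟨F, hnewt⟩, hγ0, hrd0, hsticky, hcoll⟩ := hγ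
  obtain ⟨hW1, hWeven, ⟨K, hK⟩, hc, hconv⟩ := hW
  set r := Real.sqrt c with hrdef
  have hr : 0 < r := Real.sqrt_pos.2 hc
  have hrc : r * r = c := Real.mul_self_sqrt hc.le
  have hK0 : 0 ≤ K := by
    have h1 := hK 0
    rw [abs_zero] at h1
    have h2 := abs_nonneg (deriv W 0)
    nlinarith
  -- semiconvexity of the derivative
  have hWc : ∀ u u' : ℝ, u' ≤ u → deriv W u' - deriv W u ≤ c * (u - u') := by
    have hWd : ∀ z : ℝ, HasDerivAt W (deriv W z) z := fun z =>
      ((hW1.differentiable one_ne_zero) z).hasDerivAt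
    have hfd : ∀ z : ℝ, HasDerivAt (fun y => W y + c / 2 * y ^ 2) (deriv W z + c * z) z := by
      intro z
      have h2 : HasDerivAt (fun y : ℝ => c / 2 * y ^ 2) (c * z) z := by
        have := (hasDerivAt_pow 2 z).const_mul (c / 2)
        exact this.congr_deriv (by push_cast; ring)
      exact (hWd z).add h2
    have hmono := hconv.monotoneOn_deriv (fun z _ => (hfd z).differentiableAt)
    intro u u' h
    have h1 := hmono (mem_univ u') (mem_univ u) h
    rw [(hfd u').deriv, (hfd u).deriv] at h1
    linarith
  -- order preservation
  have horder : ∀ k l, x l ≤ x k → ∀ t : ℝ, 0 ≤ t → γ l t ≤ γ k t := by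
    intro k l hxlk t ht
    rcases eq_or_lt_of_le hxlk with he | hlt
    · have : l = k := hx he
      rw [this]
    · by_contra hcon
      push_neg at hcon
      have hsub : Icc (0:ℝ) t ⊆ Ici 0 := fun s hs => hs.1
      have hcs : ContinuousOn (fun s => γ k s - γ l s) (Icc 0 t) :=
        ((hcont k).mono hsub).sub ((hcont l).mono hsub)
      have hiv := intermediate_value_Icc' ht hcs
      have h0' : γ k 0 - γ l 0 = x k - x l := by rw [hγ0 k, hγ0 l]
      have hmem : (0:ℝ) ∈ Icc (γ k t - γ l t) (γ k 0 - γ l 0) :=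
        ⟨by linarith, by rw [h0']; linarith⟩
      obtain ⟨s, hsmem, hs0⟩ := hiv hmem
      have heq : γ k s = γ l s := by
        have : γ k s - γ l s = 0 := hs0
        linarith
      have := hsticky k l s t hsmem.1 hsmem.2 heq
      rw [this] at hcon
      exact absurd hcon (lt_irrefl _)
  -- the integrated modulus and the comparison function
  set ψ : ℝ → ℝ := fun z => ∫ u in (0:ℝ)..z, |v₀' u| with hψdef
  have hint : ∀ p q : ℝ, IntervalIntegrable (fun u => |v₀' u|) volume p q := by
    intro p q
    rw [intervalIntegrable_iff']
    exact MeasureTheory.Integrable.abs (hv₀'loc.integrableOn_isCompact isCompact_uIcc)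
  have hintv : ∀ p q : ℝ, IntervalIntegrable v₀' volume p q := by
    intro p q
    rw [intervalIntegrable_iff']
    exact hv₀'loc.integrableOn_isCompact isCompact_uIcc
  have hψadd : ∀ p q : ℝ, ψ q - ψ p = ∫ u in p..q, |v₀' u| := by
    intro p q
    have := intervalIntegral.integral_add_adjacent_intervals (hint 0 p) (hint p q)
    rw [hψdef]; simp only
    linarith
  set Φ : ℝ → ℝ := fun z => r * z + ψ z with hΦdef
  have hΦ : Monotone Φ := by
    intro p q hpq
    have h1 : 0 ≤ ∫ u in p..q, |v₀' u| :=
      intervalIntegral.integral_nonneg hpq (fun u _ => abs_nonneg _)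
    have h2 := hψadd p q
    have h3 := mul_le_mul_of_nonneg_left hpq hr.le
    simp only [hΦdef]
    linarith
  have hvψ : ∀ p q : ℝ, p ≤ q → v₀ q - v₀ p ≤ ψ q - ψ p := by
    intro p q h
    rw [hψadd p q, hv₀ p q]
    exact intervalIntegral.integral_mono_on h (hintv p q) (hint p q) (fun u _ => le_abs_self _)
  -- the invariant at time 0
  have good0 : GoodPred x γ rd r Φ 0 := by
    intro k l hxlk
    rw [hrd0 k, hrd0 l, hγ0 k, hγ0 l, hv k, hv l]
    have h1 := hvψ (x l) (x k) hxlk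
    simp only [hΦdef, mul_zero, Real.exp_zero, one_mul]
    linarith
  -- bridging over one F-free interval
  have bridge : ∀ t : ℝ, 0 < t → ∀ a : ℝ, 0 ≤ a → a < t → (∀ u ∈ Ioo a t, u ∉ F) →
      GoodPred x γ rd r Φ a → GoodPred x γ rd r Φ t := by
    intro t ht a ha hat hfr hGa
    have hp := piece hrc hcont hrdW hldW hnewt hK0 hK hWc hm hsum horder ha hat hfr hGa
    exact stepB hΦ hm horder hldW hcoll ht hp.2
  -- induction over the exceptional times
  have key : ∀ n : ℕ, ∀ t : ℝ, 0 ≤ t → (F.filter (fun u => 0 < u ∧ u < t)).card ≤ n →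
      GoodPred x γ rd r Φ t := by
    intro n
    induction n with
    | zero =>
      intro t ht hcard
      rcases ht.eq_or_lt with he | ht'
      · rw [← he]; exact good0
      have hempty : F.filter (fun u => 0 < u ∧ u < t) = ∅ :=
        Finset.card_eq_zero.1 (Nat.le_zero.1 hcard)
      refine bridge t ht' 0 le_rfl ht' ?_ good0
      intro u hu huF
      have : u ∈ F.filter (fun u => 0 < u ∧ u < t) := Finset.mem_filter.2 ⟨huF, hu.1, hu.2⟩
      rw [hempty] at this
      exact absurd this (Finset.notMem_empty u)
    | succ n ih =>
      intro t ht hcard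
      rcases ht.eq_or_lt with he | ht'
      · rw [← he]; exact good0
      set G := insert (0:ℝ) (F.filter (fun u => 0 < u ∧ u < t)) with hG
      have hGne : G.Nonempty := ⟨0, Finset.mem_insert_self _ _⟩
      set a' := G.max' hGne with ha'
      have ha'mem : a' ∈ G := Finset.max'_mem _ _
      have ha'0 : 0 ≤ a' := Finset.le_max' G 0 (Finset.mem_insert_self _ _)
      have ha't : a' < t := by
        rw [ha', Finset.max'_lt_iff]
        intro u hu
        rcases Finset.mem_insert.1 hu with h0 | hmem
        · rw [h0]; exact ht'
        · exact (Finset.mem_filter.1 hmem).2.2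
      have hfr : ∀ u ∈ Ioo a' t, u ∉ F := by
        intro u hu huF
        have humem : u ∈ G := Finset.mem_insert_of_mem
          (Finset.mem_filter.2 ⟨huF, lt_of_le_of_lt ha'0 hu.1, hu.2⟩)
        exact absurd (Finset.le_max' G u humem) (not_le.2 hu.1)
      have hGa : GoodPred x γ rd r Φ a' := by
        rcases Finset.mem_insert.1 ha'mem with h0 | hmem
        · rw [h0]; exact good0
        · obtain ⟨ha'F, ha'pos, ha'ltt⟩ := Finset.mem_filter.1 hmem
          refine ih a' ha'pos.le ?_
          have hsub : F.filter (fun u => 0 < u ∧ u < a') ⊆ F.filter (fun u => 0 < u ∧ u < t) := by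
            intro u hu
            obtain ⟨h1, h2, h3⟩ := Finset.mem_filter.1 hu
            exact Finset.mem_filter.2 ⟨h1, h2, h3.trans ha't⟩
          have hnm : a' ∉ F.filter (fun u => 0 < u ∧ u < a') := by
            intro hmm
            exact absurd (Finset.mem_filter.1 hmm).2.2 (lt_irrefl a')
          have hltc := Finset.card_lt_card
            ((Finset.ssubset_iff_of_subset hsub).2 ⟨a', hmem, hnm⟩)
          omega
      exact bridge t ht' a' ha'0 ha't hfr hGa
  have goodAll : ∀ t : ℝ, 0 ≤ t → GoodPred x γ rd r Φ t := fun t ht => key _ t ht le_rfl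
  -- final integration
  intro i j hxji T hT
  set f : ℝ → ℝ := fun t => (Φ (x i) - Φ (x j)) * (Real.exp (2*r*t) - 1)/(2*r)
      - Real.exp (r*t) * (γ i t - γ j t) with hf
  have hmono : f 0 ≤ f T := by
    refine mono_off_finite F hT ?_ ?_
    · have hsub : Icc (0:ℝ) T ⊆ Ici 0 := fun s hs => hs.1
      refine ContinuousOn.sub ?_ ?_
      · refine Continuous.continuousOn ?_
        exact (continuous_const.mul ((Real.continuous_exp.comp
          (continuous_const.mul continuous_id)).sub continuous_const)).div_const _
      · exact ((Real.continuous_exp.comp (continuous_const.mul continuous_id)).continuousOn).mul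
          (((hcont i).mono hsub).sub ((hcont j).mono hsub))
    · intro τ hτ hτF
      have hτ0 : 0 < τ := hτ.1
      have hγi := (hnewt i τ hτ0 hτF).1
      have hγj := (hnewt j τ hτ0 hτF).1
      have hE2 : HasDerivAt (fun t : ℝ => Real.exp (2*r*t)) (Real.exp (2*r*τ) * (2*r)) τ := by
        have h1 : HasDerivAt (fun t : ℝ => 2*r*t) (2*r) τ := by
          simpa using (hasDerivAt_id τ).const_mul (2*r)
        exact h1.exp
      have hE1 : HasDerivAt (fun t : ℝ => Real.exp (r*t)) (Real.exp (r*τ) * r) τ := by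
        have h1 : HasDerivAt (fun t : ℝ => r*t) r τ := by
          simpa using (hasDerivAt_id τ).const_mul r
        exact h1.exp
      have hfd : HasDerivAt f
          ((Φ (x i) - Φ (x j)) * (Real.exp (2*r*τ) * (2*r)) / (2*r)
            - (Real.exp (r*τ) * r * (γ i τ - γ j τ)
              + Real.exp (r*τ) * (rd i τ - rd j τ))) τ := by
        rw [hf]
        refine HasDerivAt.sub ?_ ?_
        · exact ((hE2.sub_const 1).const_mul _).div_const _
        · exact hE1.mul (hγi.sub hγj)
      refine ⟨_, ?_, hfd⟩
      have hgood := goodAll τ hτ0.le i j hxji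
      have hmul := mul_le_mul_of_nonneg_left hgood (exp_pos (r*τ)).le
      have h9 : Real.exp (r*τ) * (Real.exp (r*τ) * (Φ (x i) - Φ (x j)))
          = Real.exp (2*r*τ) * (Φ (x i) - Φ (x j)) := by
        rw [← mul_assoc, ← Real.exp_add]
        ring_nf
      have h10 : Real.exp (r*τ) * (rd i τ - rd j τ + r * (γ i τ - γ j τ))
          = Real.exp (r*τ) * (rd i τ - rd j τ) + Real.exp (r*τ) * r * (γ i τ - γ j τ) := by
        ring
      rw [h9, h10] at hmul
      have hfrac : (Φ (x i) - Φ (x j)) * (Real.exp (2*r*τ) * (2*r)) / (2*r)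
          = Real.exp (2*r*τ) * (Φ (x i) - Φ (x j)) := by
        field_simp
      rw [hfrac]
      linarith
  have hf0 : f 0 = -(x i - x j) := by
    simp [hf, hγ0 i, hγ0 j]
  have hfT : -(x i - x j) ≤ (Φ (x i) - Φ (x j)) * (Real.exp (2*r*T) - 1)/(2*r)
      - Real.exp (r*T) * (γ i T - γ j T) := by
    have h1 := hmono
    rw [hf0] at h1
    simpa only [hf] using h1
  have hIntEq : (∫ z in x j..x i, |v₀' z|) = ψ (x i) - ψ (x j) := (hψadd (x j) (x i)).symm
  rw [Real.cosh_eq, Real.sinh_eq, hIntEq]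
  set u := Real.exp (r*T) with hu
  have hupos : 0 < u := exp_pos _
  have hu2 : Real.exp (2*r*T) = u * u := by
    rw [hu, ← Real.exp_add]
    ring_nf
  have hexpneg : Real.exp (-(r*T)) = u⁻¹ := by
    rw [hu, ← Real.exp_neg]
  rw [hexpneg]
  have hΦΔ : Φ (x i) - Φ (x j) = r * (x i - x j) + (ψ (x i) - ψ (x j)) := by
    simp only [hΦdef]
    ring
  rw [hu2, hΦΔ] at hfT
  refine le_of_mul_le_mul_left ?_ hupos
  have heq : u * ((u + u⁻¹)/2 * (x i - x j) + 1/r * ((u - u⁻¹)/2) * (ψ (x i) - ψ (x j)))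
      = (x i - x j) + (r * (x i - x j) + (ψ (x i) - ψ (x j))) * (u*u - 1)/(2*r) := by
    field_simp
    ring
  rw [heq]
  linarith


end
end

section
/- Let γ₁,…,γ_N: [0,∞) → ℝ be sticky particle trajectories for distinct initial positions x₁,…,x_N, masses m₁,…,m_N > 0 with Σᵢ mᵢ = 1, initial velocities v₁,…,v_N, and potential W with semiconvexity constant c > 0, and assume the energy ½ Σᵢ mᵢ γ̇ᵢ(τ+)² + ½ Σ_{i,j} mᵢ mⱼ W(γᵢ(τ) − γⱼ(τ)) is nonincreasing in τ. Set ϑ(t) := e^{(c+1)t²} ∫₀ᵗ e^{−(c+1)s²} ds. Then for all 0 ≤ s ≤ t, Σ_{i=1}^N mᵢ (γᵢ(t) − γᵢ(s))² ≤ (t − s)(ϑ(t) − ϑ(s)) (Σᵢ mᵢ vᵢ² + ½ Σ_{i,j} mᵢ mⱼ W'(xᵢ − xⱼ)²). In particular, the map t ↦ (γ₁(t),…,γ_N(t)), viewed as the trajectory map X(xᵢ,t) = γᵢ(t) taking values in L²(ρ₀) with ρ₀ = Σᵢ mᵢ δ_{xᵢ}, is locally Lipschitz continuous. -/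
open MeasureTheory Real Filter Set Topology

noncomputable section


/-- Monotonicity from nonnegative derivative off a finite exceptional set. -/
lemma mono_off_finite_s12 : ∀ (F : Finset ℝ) (u u' : ℝ → ℝ) (a b : ℝ), a ≤ b →
    ContinuousOn u (Icc a b) →
    (∀ x ∈ Ioo a b, x ∉ F → HasDerivAt u (u' x) x) →
    (∀ x ∈ Ioo a b, x ∉ F → 0 ≤ u' x) → u a ≤ u b := by
  intro F
  induction F using Finset.strongInduction with
  | _ F ih =>
    intro u u' a b hab hc hd hpos
    by_cases hz : ∃ z ∈ F, z ∈ Ioo a b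
    · obtain ⟨z, hzF, hz1, hz2⟩ := hz
      have h1 := ih (F.erase z) (Finset.erase_ssubset hzF) u u' a z hz1.le
        (hc.mono (Icc_subset_Icc le_rfl hz2.le))
        (fun x hx hxe => hd x ⟨hx.1, hx.2.trans hz2⟩
          (fun hxF => hxe (Finset.mem_erase.2 ⟨hx.2.ne, hxF⟩)))
        (fun x hx hxe => hpos x ⟨hx.1, hx.2.trans hz2⟩
          (fun hxF => hxe (Finset.mem_erase.2 ⟨hx.2.ne, hxF⟩)))
      have h2 := ih (F.erase z) (Finset.erase_ssubset hzF) u u' z b hz2.le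
        (hc.mono (Icc_subset_Icc hz1.le le_rfl))
        (fun x hx hxe => hd x ⟨hz1.trans hx.1, hx.2⟩
          (fun hxF => hxe (Finset.mem_erase.2 ⟨hx.1.ne', hxF⟩)))
        (fun x hx hxe => hpos x ⟨hz1.trans hx.1, hx.2⟩
          (fun hxF => hxe (Finset.mem_erase.2 ⟨hx.1.ne', hxF⟩)))
      linarith
    · push_neg at hz
      have hmono : MonotoneOn u (Icc a b) := by
        apply monotoneOn_of_deriv_nonneg (convex_Icc a b) hc
        · rw [interior_Icc]
          intro x hx
          exact (hd x hx (fun hF => hz x hF hx)).differentiableAt.differentiableWithinAt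
        · rw [interior_Icc]
          intro x hx
          rw [(hd x hx (fun hF => hz x hF hx)).deriv]
          exact hpos x hx (fun hF => hz x hF hx)
      exact hmono (left_mem_Icc.2 hab) (right_mem_Icc.2 hab) hab

/-- Tangent line inequality for a convex differentiable function on ℝ. -/
lemma convexOn_tangent {V : ℝ → ℝ} (hV : ConvexOn ℝ Set.univ V) {a b va : ℝ}
    (ha : HasDerivAt V va a) : V a + va * (b - a) ≤ V b := by
  rcases lt_trichotomy a b with h | h | h
  · have := hV.le_slope_of_hasDerivAt (mem_univ a) (mem_univ b) h ha
    rw [slope_def_field] at this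
    have hba : 0 < b - a := by linarith
    rw [le_div_iff₀ hba] at this
    linarith
  · simp [h]
  · have := hV.slope_le_of_hasDerivAt (mem_univ b) (mem_univ a) h ha
    rw [slope_def_field] at this
    have hab : 0 < a - b := by linarith
    rw [div_le_iff₀ hab] at this
    nlinarith

/-- Cauchy–Schwarz for interval integrals. -/
lemma sq_intervalIntegral_le {h : ℝ → ℝ} {a b : ℝ} (hab : a ≤ b)
    (h1 : IntervalIntegrable h volume a b)
    (h2 : IntervalIntegrable (fun τ => (h τ)^2) volume a b) :
    (∫ τ in a..b, h τ)^2 ≤ (b - a) * ∫ τ in a..b, (h τ)^2 := by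
  set Iv := ∫ τ in a..b, h τ with hIv
  set J := ∫ τ in a..b, (h τ)^2 with hJ
  set L := b - a with hL
  have hL0 : 0 ≤ L := by simp only [hL]; linarith
  have h0 : 0 ≤ ∫ τ in a..b, (L * h τ - Iv)^2 :=
    intervalIntegral.integral_nonneg hab (fun x _ => sq_nonneg _)
  have e : ∫ τ in a..b, (L * h τ - Iv)^2 = L^2 * J - 2*L*Iv*Iv + Iv^2 * L := by
    have e1 : ∀ τ ∈ Set.uIcc a b, (L * h τ - Iv)^2
        = L^2 * (h τ)^2 - (2*L*Iv) * h τ + Iv^2 := fun τ _ => by ring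
    rw [intervalIntegral.integral_congr e1]
    rw [intervalIntegral.integral_add ((h2.const_mul _).sub (h1.const_mul _))
      intervalIntegrable_const,
      intervalIntegral.integral_sub (h2.const_mul _) (h1.const_mul _),
      intervalIntegral.integral_const_mul, intervalIntegral.integral_const_mul,
      intervalIntegral.integral_const]
    rw [← hIv, ← hJ, smul_eq_mul]
    ring
  rw [e] at h0
  rcases eq_or_lt_of_le hab with rfl | hlt
  · have : Iv = 0 := by rw [hIv, intervalIntegral.integral_same]
    rw [this]
    simp only [hL, sub_self, zero_mul, ne_eq, OfNat.ofNat_ne_zero, not_false_eq_true,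
      zero_pow, le_refl]
  · have hLpos : 0 < L := by simp only [hL]; linarith
    nlinarith [h0, hLpos]




set_option maxHeartbeats 1600000 in
/-- Part (iii) of Proposition 3.9: the discrete trajectory map is locally
Lipschitz from `[0,∞)` into `L²(ρ₀)`, with the explicit estimate in terms of
`ϑ(t) = e^{(c+1)t²}∫₀ᵗ e^{-(c+1)s²} ds`. -/
theorem sticky_particle_trajectory_map_locally_Lipschitz
    (N : ℕ) (x m v : Fin N → ℝ) (W : ℝ → ℝ) (c : ℝ)
    (hx : Function.Injective x)
    (hm : ∀ i, 0 < m i) (hsum : ∑ i, m i = 1)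
    (hW : WHyp W c)
    (γ rd ld : Fin N → ℝ → ℝ)
    (hγ : StickyTrajectories N x m v W γ rd ld)
    -- the energy is nonincreasing
    (hE : ∀ s t : ℝ, 0 ≤ s → s < t →
      (1/2) * (∑ i, m i * (rd i t) ^ 2) +
        (1/2) * (∑ i, ∑ j, m i * m j * W (γ i t - γ j t)) ≤
      (1/2) * (∑ i, m i * (rd i s) ^ 2) +
        (1/2) * (∑ i, ∑ j, m i * m j * W (γ i s - γ j s)))
    (θ : ℝ → ℝ)
    (hθ : ∀ t, θ t =
      Real.exp ((c + 1) * t ^ 2) * ∫ s in (0:ℝ)..t, Real.exp (-(c + 1) * s ^ 2)) :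
    (∀ s t : ℝ, 0 ≤ s → s ≤ t →
      ∑ i, m i * (γ i t - γ i s) ^ 2 ≤
        (t - s) * (θ t - θ s) *
          ((∑ i, m i * (v i) ^ 2) +
            (1/2) * ∑ i, ∑ j, m i * m j * (deriv W (x i - x j)) ^ 2)) ∧
    -- in particular, local Lipschitz continuity of the trajectory map in L²(ρ₀)
    (∀ T : ℝ, 0 < T → ∃ L : ℝ, ∀ s ∈ Icc (0:ℝ) T, ∀ t ∈ Icc (0:ℝ) T,
      ∑ i, m i * (γ i t - γ i s) ^ 2 ≤ L * (t - s) ^ 2) := by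
  obtain ⟨hW1, hWeven, hWgrow, hc, hconv⟩ := hW
  obtain ⟨hcont, hrdD, hldD, ⟨F, hF⟩, hγ0, hrd0, hstick, hcoll⟩ := hγ
  have hθfun : θ = fun t => Real.exp ((c + 1) * t ^ 2) *
      ∫ s in (0:ℝ)..t, Real.exp (-(c + 1) * s ^ 2) := funext hθ
  subst hθfun
  set θ : ℝ → ℝ := fun t => Real.exp ((c + 1) * t ^ 2) *
      ∫ s in (0:ℝ)..t, Real.exp (-(c + 1) * s ^ 2) with hθdef
  have hk0 : (0:ℝ) < c + 1 := by linarith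
  have hWd : Differentiable ℝ W := hW1.differentiable one_ne_zero
  -- tangent inequality for W
  have htan : ∀ a b : ℝ, W a - W b ≤ deriv W a * (a - b) + c/2 * (a - b)^2 := by
    intro a b
    have hVd : HasDerivAt (fun y => W y + c / 2 * y ^ 2)
        (deriv W a + c / 2 * (↑2 * a ^ 1)) a :=
      (hWd a).hasDerivAt.add ((hasDerivAt_pow 2 a).const_mul (c/2))
    have h := convexOn_tangent hconv (b := b) hVd
    simp only [pow_one, Nat.cast_ofNat] at h
    nlinarith [h]
  -- basic quantities
  set A := (∑ i, m i * v i ^ 2) +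
      (1/2) * ∑ i, ∑ j, m i * m j * (deriv W (x i - x j))^2 with hA
  have hA0 : 0 ≤ A := by
    apply add_nonneg
    · exact Finset.sum_nonneg fun i _ => mul_nonneg (hm i).le (sq_nonneg _)
    · apply mul_nonneg (by norm_num)
      exact Finset.sum_nonneg fun i _ => Finset.sum_nonneg fun j _ =>
        mul_nonneg (mul_nonneg (hm i).le (hm j).le) (sq_nonneg _)
  set G := fun τ : ℝ => ∑ i, m i * (γ i τ - x i)^2 with hG
  set f := fun τ : ℝ => ∑ i, m i * rd i τ ^ 2 with hfdef
  have hfnonneg : ∀ τ, 0 ≤ f τ :=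
    fun τ => Finset.sum_nonneg fun i _ => mul_nonneg (hm i).le (sq_nonneg _)
  have hGnonneg : ∀ τ, 0 ≤ G τ :=
    fun τ => Finset.sum_nonneg fun i _ => mul_nonneg (hm i).le (sq_nonneg _)
  -- velocity bound
  have hC : ∀ τ : ℝ, 0 ≤ τ → f τ ≤ A + 2*(c+1) * G τ := by
    intro τ hτ
    have hterm : ∀ i j : Fin N, m i * m j * (W (x i - x j) - W (γ i τ - γ j τ)) ≤
        m i * m j * (1/2 * (deriv W (x i - x j))^2
          + (c+1) * ((γ i τ - x i)^2 + (γ j τ - x j)^2)) := by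
      intro i j
      refine mul_le_mul_of_nonneg_left ?_ (mul_nonneg (hm i).le (hm j).le)
      have h1 := htan (x i - x j) (γ i τ - γ j τ)
      nlinarith [sq_nonneg (deriv W (x i - x j) - ((x i - x j) - (γ i τ - γ j τ))),
        sq_nonneg ((γ i τ - x i) + (γ j τ - x j)),
        mul_nonneg hc.le (sq_nonneg ((γ i τ - x i) + (γ j τ - x j)))]
    have h3 : ∑ i, ∑ j, m i * m j * (1/2 * (deriv W (x i - x j))^2)
        = 1/2 * ∑ i, ∑ j, m i * m j * (deriv W (x i - x j))^2 := by
      rw [Finset.mul_sum]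
      refine Finset.sum_congr rfl fun i _ => ?_
      rw [Finset.mul_sum]
      exact Finset.sum_congr rfl fun j _ => by ring
    have h2 : ∑ i, ∑ j, m i * m j * ((c+1) * ((γ i τ - x i)^2 + (γ j τ - x j)^2))
        = 2*(c+1) * G τ := by
      have inner1 : ∀ i : Fin N,
          ∑ j, m i * m j * ((c+1) * ((γ i τ - x i)^2 + (γ j τ - x j)^2))
          = (c+1) * (m i * (γ i τ - x i)^2) + (c+1) * m i * G τ := by
        intro i
        calc ∑ j, m i * m j * ((c+1) * ((γ i τ - x i)^2 + (γ j τ - x j)^2))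
            = ∑ j, ((c+1) * (m i * (γ i τ - x i)^2) * m j
              + (c+1) * m i * (m j * (γ j τ - x j)^2)) :=
              Finset.sum_congr rfl fun j _ => by ring
          _ = (c+1) * (m i * (γ i τ - x i)^2) * (∑ j, m j)
              + (c+1) * m i * (∑ j, m j * (γ j τ - x j)^2) := by
              rw [Finset.sum_add_distrib, ← Finset.mul_sum, ← Finset.mul_sum]
          _ = (c+1) * (m i * (γ i τ - x i)^2) + (c+1) * m i * G τ := by
              rw [hsum, mul_one, hG]
      calc ∑ i, ∑ j, m i * m j * ((c+1) * ((γ i τ - x i)^2 + (γ j τ - x j)^2))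
          = ∑ i, ((c+1) * (m i * (γ i τ - x i)^2) + (c+1) * m i * G τ) :=
            Finset.sum_congr rfl fun i _ => inner1 i
        _ = ∑ i, ((c+1) * (m i * (γ i τ - x i)^2) + m i * ((c+1) * G τ)) :=
            Finset.sum_congr rfl fun i _ => by ring
        _ = (c+1) * (∑ i, m i * (γ i τ - x i)^2) + (∑ i, m i) * ((c+1) * G τ) := by
            rw [Finset.sum_add_distrib, ← Finset.mul_sum, ← Finset.sum_mul]
        _ = 2*(c+1) * G τ := by
            rw [hsum, one_mul]
            have hGτ' : ∑ i, m i * (γ i τ - x i)^2 = G τ := rfl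
            rw [hGτ']
            ring
    have hsplit : ∑ i, ∑ j, m i * m j * (1/2 * (deriv W (x i - x j))^2
          + (c+1) * ((γ i τ - x i)^2 + (γ j τ - x j)^2))
        = (∑ i, ∑ j, m i * m j * (1/2 * (deriv W (x i - x j))^2))
          + ∑ i, ∑ j, m i * m j * ((c+1) * ((γ i τ - x i)^2 + (γ j τ - x j)^2)) := by
      rw [← Finset.sum_add_distrib]
      refine Finset.sum_congr rfl fun i _ => ?_
      rw [← Finset.sum_add_distrib]
      exact Finset.sum_congr rfl fun j _ => by ring
    have hsum2 : ∑ i, ∑ j, m i * m j * (W (x i - x j) - W (γ i τ - γ j τ))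
        ≤ 1/2 * (∑ i, ∑ j, m i * m j * (deriv W (x i - x j))^2) + 2*(c+1) * G τ := by
      calc ∑ i, ∑ j, m i * m j * (W (x i - x j) - W (γ i τ - γ j τ))
          ≤ ∑ i, ∑ j, m i * m j * (1/2 * (deriv W (x i - x j))^2
            + (c+1) * ((γ i τ - x i)^2 + (γ j τ - x j)^2)) :=
            Finset.sum_le_sum fun i _ => Finset.sum_le_sum fun j _ => hterm i j
        _ = 1/2 * (∑ i, ∑ j, m i * m j * (deriv W (x i - x j))^2) + 2*(c+1) * G τ := by
            rw [hsplit, h3, h2]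
    rcases eq_or_lt_of_le hτ with rfl | hτpos
    · have hf0 : f 0 = ∑ i, m i * v i ^ 2 := by
        simp only [hfdef]
        exact Finset.sum_congr rfl fun i _ => by rw [hrd0]
      rw [hf0, hA]
      have hWsq : 0 ≤ (1/2) * ∑ i, ∑ j, m i * m j * (deriv W (x i - x j))^2 := by
        apply mul_nonneg (by norm_num)
        exact Finset.sum_nonneg fun i _ => Finset.sum_nonneg fun j _ =>
          mul_nonneg (mul_nonneg (hm i).le (hm j).le) (sq_nonneg _)
      nlinarith [mul_nonneg (by linarith : (0:ℝ) ≤ 2*(c+1)) (hGnonneg 0)]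
    · have hE' := hE 0 τ le_rfl hτpos
      simp only [hγ0, hrd0] at hE'
      have hdiff : ∑ i, ∑ j, m i * m j * W (x i - x j)
          - ∑ i, ∑ j, m i * m j * W (γ i τ - γ j τ)
          = ∑ i, ∑ j, m i * m j * (W (x i - x j) - W (γ i τ - γ j τ)) := by
        rw [← Finset.sum_sub_distrib]
        refine Finset.sum_congr rfl fun i _ => ?_
        rw [← Finset.sum_sub_distrib]
        exact Finset.sum_congr rfl fun j _ => by ring
      have hff : f τ = ∑ i, m i * rd i τ ^ 2 := rfl
      rw [hff, hA]
      linarith [hE', hsum2, hdiff]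
  -- the open set where things are differentiable
  set U : Set ℝ := Ioi 0 \ ↑F with hU
  have hUopen : IsOpen U := isOpen_Ioi.sdiff F.finite_toSet.isClosed
  have hrdC : ∀ i, ∀ τ ∈ U, ContinuousAt (rd i) τ :=
    fun i τ hτ => (hF i τ hτ.1 (fun hh => hτ.2 (Finset.mem_coe.2 hh))).2.continuousAt
  have hfC : ∀ τ ∈ U, ContinuousAt f τ := by
    intro τ hτ
    exact tendsto_finset_sum _ fun i _ => (((hrdC i τ hτ).pow 2).const_mul (m i))
  -- measurability of a.e.-continuous functions on positive intervals
  have hmeas : ∀ (h : ℝ → ℝ), (∀ τ ∈ U, ContinuousAt h τ) → ∀ a b : ℝ, 0 ≤ a →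
      AEStronglyMeasurable h (volume.restrict (Ioc a b)) := by
    intro h hh a b ha
    have hcontU : ContinuousOn h U := fun τ hτ => (hh τ hτ).continuousWithinAt
    have hUmeas : AEMeasurable h (volume.restrict U) :=
      hcontU.aemeasurable hUopen.measurableSet
    have hnull : volume (↑F : Set ℝ) = 0 := F.finite_toSet.measure_zero _
    have hae : (Ioc a b \ ↑F : Set ℝ) =ᵐ[volume] Ioc a b :=
      diff_ae_eq_self.2 (measure_mono_null inter_subset_right hnull)
    rw [← Measure.restrict_congr_set hae]
    have hsub : (Ioc a b \ ↑F) ⊆ U := fun τ hτ => ⟨lt_of_le_of_lt ha hτ.1.1, hτ.2⟩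
    exact (hUmeas.mono_measure (Measure.restrict_mono hsub le_rfl)).aestronglyMeasurable
  -- integrability of bounded a.e.-continuous functions
  have hII : ∀ (h : ℝ → ℝ), (∀ τ ∈ U, ContinuousAt h τ) → ∀ a b C : ℝ, 0 ≤ a → a ≤ b →
      (∀ τ ∈ Icc a b, |h τ| ≤ C) → IntervalIntegrable h volume a b := by
    intro h hh a b C ha hab hC
    rw [intervalIntegrable_iff_integrableOn_Ioc_of_le hab]
    refine Integrable.mono' (g := fun _ => C)
      (integrableOn_const measure_Ioc_lt_top.ne) (hmeas h hh a b ha) ?_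
    refine (ae_restrict_iff' measurableSet_Ioc).2 (Eventually.of_forall fun τ hτ => ?_)
    exact hC τ (Ioc_subset_Icc_self hτ)
  -- boundedness of f on compact intervals
  have hbd : ∀ b : ℝ, 0 ≤ b → ∃ C : ℝ, 0 ≤ C ∧ ∀ τ ∈ Icc (0:ℝ) b, f τ ≤ C := by
    intro b hb
    have hGc : ContinuousOn G (Icc (0:ℝ) b) := by
      intro τ hτ
      apply tendsto_finset_sum
      intro i _
      have h1 : ContinuousWithinAt (γ i) (Icc (0:ℝ) b) τ :=
        ((hcont i).mono (fun σ hσ => hσ.1)) τ hτ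
      exact ((h1.sub continuousWithinAt_const).pow 2).const_mul (m i)
    obtain ⟨C0, hC0⟩ := isCompact_Icc.exists_bound_of_continuousOn hGc
    have hC00 : 0 ≤ C0 := le_trans (norm_nonneg _) (hC0 0 ⟨le_rfl, hb⟩)
    refine ⟨A + 2*(c+1)*C0, by nlinarith, fun τ hτ => ?_⟩
    have h1 := hC τ hτ.1
    have h2 : G τ ≤ C0 := le_trans (le_abs_self _) (hC0 τ hτ)
    nlinarith [hk0]
  -- bound on rd i
  have hrdbd : ∀ b : ℝ, 0 ≤ b → ∀ i, ∃ C : ℝ, ∀ τ ∈ Icc (0:ℝ) b, |rd i τ| ≤ C := by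
    intro b hb i
    obtain ⟨C, hC0, hC⟩ := hbd b hb
    refine ⟨max 1 (C / m i), fun τ hτ => ?_⟩
    have h1 : m i * rd i τ ^ 2 ≤ C := by
      refine le_trans ?_ (hC τ hτ)
      exact Finset.single_le_sum (f := fun j => m j * rd j τ ^ 2)
        (fun j _ => mul_nonneg (hm j).le (sq_nonneg _)) (Finset.mem_univ i)
    have h2 : rd i τ ^ 2 ≤ C / m i := by
      rw [le_div_iff₀ (hm i)]
      nlinarith [hm i]
    rcases le_total |rd i τ| 1 with h | h
    · exact h.trans (le_max_left _ _)
    · refine le_trans ?_ (le_max_right _ _)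
      calc |rd i τ| ≤ |rd i τ| * |rd i τ| := by nlinarith [abs_nonneg (rd i τ)]
        _ = rd i τ ^ 2 := by rw [abs_mul_abs_self]; ring
        _ ≤ C / m i := h2
  have hfint : ∀ a b : ℝ, 0 ≤ a → a ≤ b → IntervalIntegrable f volume a b := by
    intro a b ha hab
    obtain ⟨C, hC0, hC⟩ := hbd b (ha.trans hab)
    refine hII f hfC a b C ha hab fun τ hτ => ?_
    rw [abs_of_nonneg (hfnonneg τ)]
    exact hC τ ⟨ha.trans hτ.1, hτ.2⟩
  have hrdint : ∀ i, ∀ a b : ℝ, 0 ≤ a → a ≤ b → IntervalIntegrable (rd i) volume a b := by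
    intro i a b ha hab
    obtain ⟨C, hC⟩ := hrdbd b (ha.trans hab) i
    exact hII (rd i) (hrdC i) a b C ha hab fun τ hτ => hC τ ⟨ha.trans hτ.1, hτ.2⟩
  have hrdsqint : ∀ i, ∀ a b : ℝ, 0 ≤ a → a ≤ b →
      IntervalIntegrable (fun τ => (rd i τ)^2) volume a b := by
    intro i a b ha hab
    obtain ⟨C, hC⟩ := hrdbd b (ha.trans hab) i
    refine hII _ (fun τ hτ => (hrdC i τ hτ).pow 2) a b (C^2) ha hab fun τ hτ => ?_
    rw [abs_of_nonneg (sq_nonneg _), Pi.pow_apply, ← sq_abs (rd i τ)]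
    have := hC τ ⟨ha.trans hτ.1, hτ.2⟩
    nlinarith [abs_nonneg (rd i τ)]
  -- fundamental theorem of calculus for the trajectories
  have hFTC : ∀ i, ∀ a b : ℝ, 0 ≤ a → a ≤ b →
      (∫ τ in a..b, rd i τ) = γ i b - γ i a := by
    intro i a b ha hab
    apply intervalIntegral.integral_eq_sub_of_hasDeriv_right_of_le hab
    · exact (hcont i).mono fun τ hτ => ha.trans hτ.1
    · intro τ hτ
      exact (hrdD i τ (ha.trans hτ.1.le)).mono Ioi_subset_Ici_self
    · exact hrdint i a b ha hab
  -- the primitive g of f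
  set g := fun t : ℝ => ∫ τ in (0:ℝ)..t, f τ with hgdef
  have hg0 : g 0 = 0 := intervalIntegral.integral_same
  have hgcont : ∀ b : ℝ, 0 ≤ b → ContinuousOn g (Icc 0 b) := by
    intro b hb
    have := intervalIntegral.continuousOn_primitive_interval (a := 0) (b := b) (f := f) (μ := volume) ?_
    · rwa [uIcc_of_le hb] at this
    · rw [uIcc_of_le hb]
      exact (intervalIntegrable_iff_integrableOn_Icc_of_le hb).1 (hfint 0 b le_rfl hb)
  have hgd : ∀ τ ∈ U, HasDerivAt g (f τ) τ := fun τ hτ =>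
    intervalIntegral.integral_hasDerivAt_right (hfint 0 τ le_rfl (le_of_lt hτ.1))
      (ContinuousAt.stronglyMeasurableAtFilter hUopen hfC τ hτ) (hfC τ hτ)
  -- Cauchy-Schwarz step
  have hGle : ∀ τ : ℝ, 0 ≤ τ → G τ ≤ τ * g τ := by
    intro τ hτ
    have key : ∀ i : Fin N, (γ i τ - x i)^2 ≤ τ * ∫ σ in (0:ℝ)..τ, (rd i σ)^2 := by
      intro i
      have h1 := hFTC i 0 τ le_rfl hτ
      rw [hγ0 i] at h1
      have h2 := sq_intervalIntegral_le hτ (hrdint i 0 τ le_rfl hτ) (hrdsqint i 0 τ le_rfl hτ)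
      rw [h1] at h2
      simpa using h2
    have hgτ : g τ = ∑ i, m i * ∫ σ in (0:ℝ)..τ, (rd i σ)^2 := by
      simp only [hgdef, hfdef]
      rw [intervalIntegral.integral_finset_sum
        (fun i _ => (hrdsqint i 0 τ le_rfl hτ).const_mul (m i))]
      exact Finset.sum_congr rfl fun i _ => intervalIntegral.integral_const_mul _ _
    have hGτ : G τ = ∑ i, m i * (γ i τ - x i)^2 := rfl
    rw [hGτ, hgτ, Finset.mul_sum]
    refine Finset.sum_le_sum fun i _ => ?_
    calc m i * (γ i τ - x i)^2 ≤ m i * (τ * ∫ σ in (0:ℝ)..τ, (rd i σ)^2) :=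
        mul_le_mul_of_nonneg_left (key i) (hm i).le
      _ = τ * (m i * ∫ σ in (0:ℝ)..τ, (rd i σ)^2) := by ring
  have hfg : ∀ τ : ℝ, 0 ≤ τ → f τ ≤ A + 2*(c+1) * (τ * g τ) := by
    intro τ hτ
    have h1 := hC τ hτ
    have h2 := hGle τ hτ
    nlinarith [hk0]
  -- properties of θ
  have hθd : ∀ t : ℝ, HasDerivAt θ (2*(c+1)*t*θ t + 1) t := by
    intro t
    have h1 : HasDerivAt (fun u : ℝ => (c+1)*u^2) ((c+1)*(2*t)) t := by
      simpa using (hasDerivAt_pow 2 t).const_mul (c+1)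
    have h2 := h1.exp
    have hcont2 : Continuous (fun s : ℝ => Real.exp (-(c+1)*s^2)) := by fun_prop
    have h3 : HasDerivAt (fun u : ℝ => ∫ s in (0:ℝ)..u, Real.exp (-(c+1)*s^2))
        (Real.exp (-(c+1)*t^2)) t :=
      intervalIntegral.integral_hasDerivAt_right (hcont2.intervalIntegrable 0 t)
        (hcont2.stronglyMeasurableAtFilter volume (𝓝 t)) hcont2.continuousAt
    have h4 := h2.mul h3
    have hee : Real.exp ((c+1)*t^2) * Real.exp (-(c+1)*t^2) = 1 := by
      rw [← Real.exp_add, show (c+1)*t^2 + -(c+1)*t^2 = 0 by ring, Real.exp_zero]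
    refine h4.congr_deriv ?_
    have hθt : θ t = Real.exp ((c+1)*t^2) * ∫ s in (0:ℝ)..t, Real.exp (-(c+1)*s^2) := rfl
    rw [hθt]
    linear_combination hee
  have hθcont : Continuous θ := continuous_iff_continuousAt.2 fun t => (hθd t).continuousAt
  have hθ0 : θ 0 = 0 := by
    simp [hθdef]
  have hθnonneg : ∀ t : ℝ, 0 ≤ t → 0 ≤ θ t := by
    intro t ht
    apply mul_nonneg (Real.exp_pos _).le
    exact intervalIntegral.integral_nonneg ht fun τ _ => (Real.exp_pos _).le
  have hθmono : ∀ s t : ℝ, 0 ≤ s → s ≤ t → θ s ≤ θ t := by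
    intro s t hs hst
    have hsq : s^2 ≤ t^2 := by nlinarith
    apply mul_le_mul
    · exact Real.exp_le_exp.2 (by nlinarith [mul_le_mul_of_nonneg_left hsq hk0.le])
    · apply intervalIntegral.integral_mono_interval le_rfl hs hst
      · exact Eventually.of_forall fun τ => (Real.exp_pos _).le
      · exact (Real.continuous_exp.comp (by fun_prop)).intervalIntegrable 0 t
    · exact intervalIntegral.integral_nonneg hs fun τ _ => (Real.exp_pos _).le
    · exact (Real.exp_pos _).le
  -- Gronwall
  have hgθ : ∀ b : ℝ, 0 ≤ b → g b ≤ A * θ b := by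
    intro b hb
    have hub := mono_off_finite_s12 F (fun τ => (A * θ τ - g τ) * Real.exp (-(c+1)*τ^2))
      (fun τ => (A*(2*(c+1)*τ*θ τ + 1) - f τ) * Real.exp (-(c+1)*τ^2)
        + (A * θ τ - g τ) * (Real.exp (-(c+1)*τ^2) * (-(c+1)*(2*τ)))) 0 b hb ?_ ?_ ?_
    · have h0 : (A * θ 0 - g 0) * Real.exp (-(c+1)*(0:ℝ)^2) = 0 := by
        rw [hθ0, hg0]; ring
      have hE2 := Real.exp_pos (-(c+1)*b^2)
      rw [h0] at hub
      nlinarith [hub, hE2]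
    · apply ContinuousOn.mul
      · exact (continuousOn_const.mul hθcont.continuousOn).sub (hgcont b hb)
      · exact Continuous.continuousOn (by fun_prop)
    · intro τ hτ hτF
      have hτU : τ ∈ U := ⟨hτ.1, fun hh => hτF (Finset.mem_coe.1 hh)⟩
      have hd1 : HasDerivAt (fun σ => A * θ σ - g σ)
          (A*(2*(c+1)*τ*θ τ + 1) - f τ) τ := ((hθd τ).const_mul A).sub (hgd τ hτU)
      have hd2 : HasDerivAt (fun σ : ℝ => Real.exp (-(c+1)*σ^2))
          (Real.exp (-(c+1)*τ^2) * (-(c+1)*(2*τ))) τ := by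
        have h5 : HasDerivAt (fun u : ℝ => -(c+1)*u^2) (-(c+1)*(2*τ)) τ := by
          simpa using (hasDerivAt_pow 2 τ).const_mul (-(c+1))
        exact h5.exp
      exact hd1.mul hd2
    · intro τ hτ hτF
      have h5 := hfg τ hτ.1.le
      have h9 : 0 ≤ (A + 2*(c+1)*(τ*g τ) - f τ) * Real.exp (-(c+1)*τ^2) :=
        mul_nonneg (by linarith) (Real.exp_pos _).le
      show (0:ℝ) ≤ (A*(2*(c+1)*τ*θ τ + 1) - f τ) * Real.exp (-(c+1)*τ^2)
        + (A * θ τ - g τ) * (Real.exp (-(c+1)*τ^2) * (-(c+1)*(2*τ)))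
      nlinarith [h9]
  -- Part 1
  have part1 : ∀ s t : ℝ, 0 ≤ s → s ≤ t →
      ∑ i, m i * (γ i t - γ i s) ^ 2 ≤ (t - s) * (θ t - θ s) * A := by
    intro s t hs hst
    have hIf : IntervalIntegrable f volume s t := hfint s t hs hst
    have key2 : ∑ i, m i * (γ i t - γ i s)^2 ≤ (t - s) * ∫ τ in s..t, f τ := by
      have key1 : ∀ i : Fin N, (γ i t - γ i s)^2 ≤ (t-s) * ∫ τ in s..t, (rd i τ)^2 := by
        intro i
        have h1 := hFTC i s t hs hst
        have h2 := sq_intervalIntegral_le hst (hrdint i s t hs hst) (hrdsqint i s t hs hst)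
        rw [h1] at h2
        exact h2
      have hfint2 : (∫ τ in s..t, f τ) = ∑ i, m i * ∫ τ in s..t, (rd i τ)^2 := by
        simp only [hfdef]
        rw [intervalIntegral.integral_finset_sum
          (fun i _ => (hrdsqint i s t hs hst).const_mul (m i))]
        exact Finset.sum_congr rfl fun i _ => intervalIntegral.integral_const_mul _ _
      rw [hfint2, Finset.mul_sum]
      refine Finset.sum_le_sum fun i _ => ?_
      calc m i * (γ i t - γ i s)^2 ≤ m i * ((t-s) * ∫ τ in s..t, (rd i τ)^2) :=
          mul_le_mul_of_nonneg_left (key1 i) (hm i).le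
        _ = (t-s) * (m i * ∫ τ in s..t, (rd i τ)^2) := by ring
    have hφc : Continuous (fun τ => A * (2*(c+1)*τ*θ τ + 1)) := by
      apply continuous_const.mul
      exact (((continuous_const.mul continuous_id).mul hθcont).add continuous_const)
    have key3 : (∫ τ in s..t, f τ) ≤ A * θ t - A * θ s := by
      have hmono := intervalIntegral.integral_mono_on hst hIf
        (hφc.intervalIntegrable s t) ?_
      · have hFTCθ : ∫ τ in s..t, A * (2*(c+1)*τ*θ τ + 1) = A * θ t - A * θ s := by
          apply intervalIntegral.integral_eq_sub_of_hasDerivAt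
          · exact fun τ _ => (hθd τ).const_mul A
          · exact hφc.intervalIntegrable s t
        rwa [hFTCθ] at hmono
      · intro τ hτ
        have hτ0 : 0 ≤ τ := hs.trans hτ.1
        have h5 := hfg τ hτ0
        have h6 := hgθ τ hτ0
        have h7 : 0 ≤ 2*(c+1)*τ := mul_nonneg (by linarith) hτ0
        have h8 := mul_le_mul_of_nonneg_left h6 h7
        nlinarith [h5, h8]
    have hts : (0:ℝ) ≤ t - s := by linarith
    calc ∑ i, m i * (γ i t - γ i s)^2 ≤ (t - s) * ∫ τ in s..t, f τ := key2
      _ ≤ (t - s) * (A * θ t - A * θ s) := mul_le_mul_of_nonneg_left key3 hts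
      _ = (t - s) * (θ t - θ s) * A := by ring
  refine ⟨part1, ?_⟩
  intro T hT
  refine ⟨A * (2*(c+1)*T*θ T + 1), ?_⟩
  have hφc2 : Continuous (fun τ : ℝ => 2*(c+1)*τ*θ τ + 1) :=
    ((continuous_const.mul continuous_id).mul hθcont).add continuous_const
  have haux : ∀ s t : ℝ, 0 ≤ s → s ≤ t → t ≤ T →
      ∑ i, m i * (γ i t - γ i s)^2 ≤ (A * (2*(c+1)*T*θ T + 1)) * (t - s)^2 := by
    intro s t hs hst htT
    have h1 := part1 s t hs hst
    have hM : θ t - θ s ≤ (2*(c+1)*T*θ T + 1) * (t - s) := by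
      have hφ : ∀ τ ∈ Icc s t, (2*(c+1)*τ*θ τ + 1) ≤ 2*(c+1)*T*θ T + 1 := by
        intro τ hτ
        have hτ0 : 0 ≤ τ := hs.trans hτ.1
        have hτT : τ ≤ T := hτ.2.trans htT
        have hθτ : θ τ ≤ θ T := hθmono τ T hτ0 hτT
        have hθτ0 : 0 ≤ θ τ := hθnonneg τ hτ0
        have hθT0 : 0 ≤ θ T := hθnonneg T (hτ0.trans hτT)
        nlinarith [hk0, mul_nonneg (sub_nonneg.2 hτT) hθT0,
          mul_nonneg hτ0 (sub_nonneg.2 hθτ)]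
      have hFTCθ : ∫ τ in s..t, (2*(c+1)*τ*θ τ + 1) = θ t - θ s := by
        apply intervalIntegral.integral_eq_sub_of_hasDerivAt (fun τ _ => hθd τ)
        exact hφc2.intervalIntegrable s t
      have hmono2 := intervalIntegral.integral_mono_on hst
        (hφc2.intervalIntegrable s t)
        (intervalIntegrable_const : IntervalIntegrable (fun _ => 2*(c+1)*T*θ T + 1) volume s t) hφ
      rw [hFTCθ, intervalIntegral.integral_const, smul_eq_mul] at hmono2
      linarith [hmono2]
    have hts : (0:ℝ) ≤ t - s := by linarith
    have hθts : 0 ≤ θ t - θ s := by linarith [hθmono s t hs hst]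
    calc ∑ i, m i * (γ i t - γ i s)^2 ≤ (t - s) * (θ t - θ s) * A := h1
      _ ≤ (t - s) * ((2*(c+1)*T*θ T + 1) * (t - s)) * A := by
          apply mul_le_mul_of_nonneg_right _ hA0
          exact mul_le_mul_of_nonneg_left hM hts
      _ = (A * (2*(c+1)*T*θ T + 1)) * (t - s)^2 := by ring
  intro s hs t ht
  rcases le_total s t with h | h
  · exact haux s t hs.1 h ht.2
  · have h1 := haux t s ht.1 h hs.2
    have e1 : ∑ i, m i * (γ i t - γ i s)^2 = ∑ i, m i * (γ i s - γ i t)^2 :=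
      Finset.sum_congr rfl fun i _ => by ring
    have e2 : (t - s)^2 = (s - t)^2 := by ring
    rw [e1, e2]
    exact h1


end
end

section
/- Let μ be a Borel probability measure on ℝ with finite second moment, and let ξ ∈ L²(μ). Then the following are equivalent: (i) ξ(x) = (sgn*μ)(x) := ∫ sgn(x − y) dμ(y) for μ-almost every x ∈ ℝ; (ii) for every continuous g: ℝ → ℝ with sup_x |g(x)|/(1+|x|) < ∞, ∫∫ ½ |x − y + (g(x) − g(y))| dμ(x) dμ(y) ≥ ∫∫ ½ |x − y| dμ(x) dμ(y) + ∫ ξ g dμ. -/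
open MeasureTheory Real Filter Set Topology

noncomputable section

private lemma measurable_realSign : Measurable Real.sign := by
  have h : Real.sign = fun r : ℝ => if r < 0 then (-1 : ℝ) else if 0 < r then 1 else 0 := by
    funext r; rfl
  rw [h]
  exact Measurable.ite measurableSet_Iio measurable_const
    (Measurable.ite measurableSet_Ioi measurable_const measurable_const)

private lemma abs_realSign_le (r : ℝ) : |Real.sign r| ≤ 1 := by
  rcases Real.sign_apply_eq r with h | h | h <;> rw [h] <;> norm_num

private lemma abs_add_sign_mul_le (a b : ℝ) : |a| + Real.sign a * b ≤ |a + b| := by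
  rcases lt_trichotomy a 0 with h | h | h
  · rw [Real.sign_of_neg h, abs_of_neg h]
    have := neg_abs_le (a + b)
    linarith [neg_abs_le (a + b), neg_le_abs (a + b)]
  · subst h; simp
  · rw [Real.sign_of_pos h, abs_of_pos h]
    have := le_abs_self (a + b)
    linarith

/-- the sign convolution -/
private def sconv (μ : Measure ℝ) : ℝ → ℝ := fun x => ∫ y, Real.sign (x - y) ∂μ

private lemma tendsto_diffquot (a b : ℝ) (hab : a = 0 → b = 0) :
    Tendsto (fun n : ℕ => (1 / (2 * ((1:ℝ) / (n + 1)))) * (|a + ((1:ℝ) / (n + 1)) * b| - |a|))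
      atTop (𝓝 ((1 / 2) * (Real.sign a * b))) := by
  by_cases hb : b = 0
  · subst hb
    simp
  · have ha : a ≠ 0 := fun h => hb (hab h)
    have hpos : (0 : ℝ) < |a| / |b| := by positivity
    have ht0 : Tendsto (fun n : ℕ => (1:ℝ) / (n + 1)) atTop (𝓝 0) :=
      tendsto_one_div_add_atTop_nhds_zero_nat
    have hev : ∀ᶠ n : ℕ in atTop,
        (1 / (2 * ((1:ℝ) / (n + 1)))) * (|a + ((1:ℝ) / (n + 1)) * b| - |a|)
          = (1 / 2) * (Real.sign a * b) := by
      filter_upwards [ht0.eventually_lt_const hpos] with n hn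
      set t : ℝ := (1:ℝ) / (n + 1) with htdef
      have htpos : 0 < t := by positivity
      have htb : t * |b| < |a| := by
        rw [div_eq_mul_inv] at hn  -- hn : t < |a| * |b|⁻¹
        have hbpos : 0 < |b| := abs_pos.mpr hb
        calc t * |b| < |a| / |b| * |b| := by
              exact mul_lt_mul_of_pos_right (by rw [div_eq_mul_inv]; exact hn) hbpos
          _ = |a| := by field_simp
      have key : |a + t * b| = |a| + t * (Real.sign a * b) := by
        rcases lt_trichotomy a 0 with h | h | h
        · rw [Real.sign_of_neg h, abs_of_neg h]
          have h1 : a + t * b < 0 := by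
            have : t * b ≤ t * |b| := by
              have := le_abs_self b
              nlinarith
            have : a + t * b ≤ a + t * |b| := by linarith
            rw [abs_of_neg h] at htb
            linarith
          rw [abs_of_neg h1]; ring
        · exact absurd h ha
        · rw [Real.sign_of_pos h, abs_of_pos h]
          have h1 : 0 < a + t * b := by
            have : -(t * b) ≤ t * |b| := by
              have := neg_abs_le b
              nlinarith
            rw [abs_of_pos h] at htb
            linarith
          rw [abs_of_pos h1]; ring
      rw [key]
      field_simp
      ring
    refine Tendsto.congr' ?_ tendsto_const_nhds
    filter_upwards [hev] with n hn
    exact hn.symm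

set_option maxHeartbeats 1600000 in
/-- Lemma 5.4: characterization of `sgn * μ` as the element of the
subdifferential of the interaction energy. -/
theorem sgn_convolution_subdifferential_characterization
    (μ : Measure ℝ) [IsProbabilityMeasure μ]
    (hmom : Integrable (fun x => x ^ 2) μ)
    (ξ : ℝ → ℝ) (hξm : Measurable ξ)
    (hξ : Integrable (fun x => (ξ x) ^ 2) μ) :
    ((∀ᵐ x ∂μ, ξ x = ∫ y, Real.sign (x - y) ∂μ) ↔
      (∀ g : ℝ → ℝ, Continuous g → (∃ C : ℝ, ∀ x, |g x| ≤ C * (1 + |x|)) →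
        (∫ y, ∫ x, (1/2) * |x - y + (g x - g y)| ∂μ ∂μ) ≥
          (∫ y, ∫ x, (1/2) * |x - y| ∂μ ∂μ) + ∫ x, ξ x * g x ∂μ)) := by
  -- Basic integrability facts
  have habs : Integrable (fun x : ℝ => |x|) μ := by
    refine ((integrable_const (1:ℝ)).add hmom).mono' measurable_abs.aestronglyMeasurable ?_
    filter_upwards with x
    rw [Real.norm_eq_abs, abs_abs]
    simp only [Pi.add_apply]
    nlinarith [sq_nonneg (|x| - 1), sq_abs x]
  have hξi : Integrable ξ μ := by
    refine ((integrable_const (1:ℝ)).add hξ).mono' hξm.aestronglyMeasurable ?_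
    filter_upwards with x
    rw [Real.norm_eq_abs]
    simp only [Pi.add_apply]
    nlinarith [sq_nonneg (|ξ x| - 1), sq_abs (ξ x)]
  -- measurability of the sign kernel
  have hks : StronglyMeasurable (fun p : ℝ × ℝ => Real.sign (p.1 - p.2)) :=
    (measurable_realSign.comp (measurable_fst.sub measurable_snd)).stronglyMeasurable
  have hsconv_sm : StronglyMeasurable (sconv μ) :=
    hks.integral_prod_right'
  have hsconv_bd : ∀ x, |sconv μ x| ≤ 1 := by
    intro x
    have : ‖∫ y, Real.sign (x - y) ∂μ‖ ≤ 1 * (μ univ).toReal := by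
      refine norm_integral_le_of_norm_le_const ?_
      filter_upwards with y
      rw [Real.norm_eq_abs]
      exact abs_realSign_le _
    simpa [sconv, measure_univ] using this
  have hsconv_int : Integrable (sconv μ) μ := by
    refine (integrable_const (1:ℝ)).mono' hsconv_sm.aestronglyMeasurable ?_
    filter_upwards with x
    rw [Real.norm_eq_abs]; exact hsconv_bd x
  -- lifting integrable functions to the product
  have hfst : ∀ f : ℝ → ℝ, Integrable f μ → Integrable (fun p : ℝ × ℝ => f p.1) (μ.prod μ) := by
    intro f hf
    have h1 : Integrable f ((μ.prod μ).map Prod.fst) := by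
      rw [Measure.map_fst_prod]
      simpa [measure_univ] using hf
    exact h1.comp_measurable measurable_fst
  have hsnd : ∀ f : ℝ → ℝ, Integrable f μ → Integrable (fun p : ℝ × ℝ => f p.2) (μ.prod μ) := by
    intro f hf
    have h1 : Integrable f ((μ.prod μ).map Prod.snd) := by
      rw [Measure.map_snd_prod]
      simpa [measure_univ] using hf
    exact h1.comp_measurable measurable_snd
  -- converting iterated integrals into product integrals for symmetric integrands
  have iter_eq : ∀ F : ℝ × ℝ → ℝ, Integrable F (μ.prod μ) →
      (∀ p : ℝ × ℝ, F (p.2, p.1) = F p) →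
      (∫ y, ∫ x, F (x, y) ∂μ ∂μ) = ∫ p, F p ∂(μ.prod μ) := by
    intro F hF hsymm
    have hswap : Integrable (F ∘ Prod.swap) (μ.prod μ) := hF.swap
    have h1 : (∫ y, ∫ x, F (x, y) ∂μ ∂μ) = ∫ p : ℝ × ℝ, F (p.2, p.1) ∂(μ.prod μ) := by
      exact integral_integral (f := fun y x => F (x, y)) hswap
    rw [h1]
    exact integral_congr_ae (Eventually.of_forall fun p => hsymm p)
  -- admissible functions are integrable and the key facts for them
  have hadm_int : ∀ g : ℝ → ℝ, Continuous g → (∀ C : ℝ, (∀ x, |g x| ≤ C * (1 + |x|)) →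
      Integrable g μ) := by
    intro g hgc C hC
    refine (((integrable_const (1:ℝ)).add habs).const_mul C).mono'
      hgc.aestronglyMeasurable ?_
    filter_upwards with x
    rw [Real.norm_eq_abs]
    simp only [Pi.add_apply]
    exact hC x
  -- the key symmetrization identity
  have key_sym : ∀ g : ℝ → ℝ, Continuous g → Integrable g μ →
      (∫ p : ℝ × ℝ, Real.sign (p.1 - p.2) * (g p.1 - g p.2) ∂(μ.prod μ))
        = 2 * ∫ x, sconv μ x * g x ∂μ := by
    intro g hgc hgi
    have hm1 : AEStronglyMeasurable (fun p : ℝ × ℝ => Real.sign (p.1 - p.2) * g p.1)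
        (μ.prod μ) :=
      ((measurable_realSign.comp (measurable_fst.sub measurable_snd)).mul
        (hgc.measurable.comp measurable_fst)).aestronglyMeasurable
    have hm2 : AEStronglyMeasurable (fun p : ℝ × ℝ => Real.sign (p.1 - p.2) * g p.2)
        (μ.prod μ) :=
      ((measurable_realSign.comp (measurable_fst.sub measurable_snd)).mul
        (hgc.measurable.comp measurable_snd)).aestronglyMeasurable
    have hb : ∀ (u : ℝ × ℝ → ℝ), (∀ p : ℝ × ℝ, |u p| ≤ 1) → ∀ (v : ℝ × ℝ → ℝ),
        Integrable v (μ.prod μ) → AEStronglyMeasurable (fun p => u p * v p) (μ.prod μ) →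
        Integrable (fun p => u p * v p) (μ.prod μ) := by
      intro u hu v hv hm
      refine hv.abs.mono' hm ?_
      filter_upwards with p
      rw [Real.norm_eq_abs, abs_mul]
      calc |u p| * |v p| ≤ 1 * |v p| := by
            exact mul_le_mul_of_nonneg_right (hu p) (abs_nonneg _)
        _ = |v p| := one_mul _
    have hint1 : Integrable (fun p : ℝ × ℝ => Real.sign (p.1 - p.2) * g p.1) (μ.prod μ) :=
      hb _ (fun p => abs_realSign_le _) _ (hfst g hgi) hm1
    have hint2 : Integrable (fun p : ℝ × ℝ => Real.sign (p.1 - p.2) * g p.2) (μ.prod μ) :=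
      hb _ (fun p => abs_realSign_le _) _ (hsnd g hgi) hm2
    have e1 : (∫ p : ℝ × ℝ, Real.sign (p.1 - p.2) * g p.1 ∂(μ.prod μ))
        = ∫ x, sconv μ x * g x ∂μ := by
      rw [integral_prod _ hint1]
      refine integral_congr_ae (Eventually.of_forall fun x => ?_)
      have : (∫ y, Real.sign (x - y) * g x ∂μ) = (∫ y, Real.sign (x - y) ∂μ) * g x :=
        integral_mul_const _ _
      simpa [sconv] using this
    have e2 : (∫ p : ℝ × ℝ, Real.sign (p.1 - p.2) * g p.2 ∂(μ.prod μ))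
        = -∫ x, sconv μ x * g x ∂μ := by
      have hsw : (∫ p : ℝ × ℝ, Real.sign (p.2 - p.1) * g p.1 ∂(μ.prod μ))
          = ∫ p : ℝ × ℝ, Real.sign (p.1 - p.2) * g p.2 ∂(μ.prod μ) :=
        integral_prod_swap (fun p : ℝ × ℝ => Real.sign (p.1 - p.2) * g p.2)
      rw [← hsw]
      have : (fun p : ℝ × ℝ => Real.sign (p.2 - p.1) * g p.1)
          = fun p : ℝ × ℝ => -(Real.sign (p.1 - p.2) * g p.1) := by
        funext p
        rw [show p.2 - p.1 = -(p.1 - p.2) by ring, Real.sign_neg]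
        ring
      rw [this, integral_neg, e1]
    have hsub : (fun p : ℝ × ℝ => Real.sign (p.1 - p.2) * (g p.1 - g p.2))
        = fun p : ℝ × ℝ => Real.sign (p.1 - p.2) * g p.1 - Real.sign (p.1 - p.2) * g p.2 := by
      funext p; ring
    rw [hsub, integral_sub hint1 hint2, e1, e2]
    ring
  -- integrability of the various product integrands
  have hF0 : Integrable (fun p : ℝ × ℝ => (1/2) * |p.1 - p.2|) (μ.prod μ) := by
    refine (((hfst _ habs).add (hsnd _ habs))).mono'
      (Continuous.aestronglyMeasurable (by continuity)) ?_
    filter_upwards with p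
    rw [Real.norm_eq_abs, abs_mul, abs_abs]
    simp only [Pi.add_apply]
    have h1 : |p.1 - p.2| ≤ |p.1| + |p.2| := abs_sub _ _
    rw [abs_of_nonneg (by norm_num : (0:ℝ) ≤ 1/2)]
    linarith [abs_nonneg (p.1 - p.2)]
  have hF1 : ∀ g : ℝ → ℝ, Continuous g → Integrable g μ →
      Integrable (fun p : ℝ × ℝ => (1/2) * |p.1 - p.2 + (g p.1 - g p.2)|) (μ.prod μ) := by
    intro g hgc hgi
    have hcont : Continuous (fun p : ℝ × ℝ => (1/2) * |p.1 - p.2 + (g p.1 - g p.2)|) :=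
      continuous_const.mul ((continuous_fst.sub continuous_snd).add
        ((hgc.comp continuous_fst).sub (hgc.comp continuous_snd))).abs
    refine ((((hfst _ habs).add (hsnd _ habs)).add
      ((hfst _ hgi.abs).add (hsnd _ hgi.abs))).mono' hcont.aestronglyMeasurable ?_)
    filter_upwards with p
    rw [Real.norm_eq_abs, abs_mul, abs_abs, abs_of_nonneg (by norm_num : (0:ℝ) ≤ 1/2)]
    simp only [Pi.add_apply]
    have h1 : |p.1 - p.2 + (g p.1 - g p.2)| ≤ (|p.1| + |p.2|) + (|g p.1| + |g p.2|) :=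
      le_trans (abs_add_le _ _) (add_le_add (abs_sub _ _) (abs_sub _ _))
    linarith [abs_nonneg (p.1 - p.2 + (g p.1 - g p.2))]
  have hS : ∀ g : ℝ → ℝ, Continuous g → Integrable g μ →
      Integrable (fun p : ℝ × ℝ => (1/2) * (Real.sign (p.1 - p.2) * (g p.1 - g p.2)))
        (μ.prod μ) := by
    intro g hgc hgi
    have hm : AEStronglyMeasurable
        (fun p : ℝ × ℝ => (1/2) * (Real.sign (p.1 - p.2) * (g p.1 - g p.2))) (μ.prod μ) :=
      (measurable_const.mul ((measurable_realSign.comp (measurable_fst.sub measurable_snd)).mul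
        ((hgc.measurable.comp measurable_fst).sub
          (hgc.measurable.comp measurable_snd)))).aestronglyMeasurable
    refine ((hfst _ hgi.abs).add (hsnd _ hgi.abs)).mono' hm ?_
    filter_upwards with p
    rw [Real.norm_eq_abs, abs_mul, abs_mul, abs_of_nonneg (by norm_num : (0:ℝ) ≤ 1/2)]
    simp only [Pi.add_apply]
    have h1 : |g p.1 - g p.2| ≤ |g p.1| + |g p.2| := abs_sub _ _
    have h2 : |Real.sign (p.1 - p.2)| ≤ 1 := abs_realSign_le _
    nlinarith [abs_nonneg (g p.1 - g p.2), abs_nonneg (Real.sign (p.1 - p.2))]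
  -- integrability of ξ * g and sconv * g
  have hg2 : ∀ g : ℝ → ℝ, Continuous g → ∀ C : ℝ, (∀ x, |g x| ≤ C * (1 + |x|)) →
      Integrable (fun x => (g x) ^ 2) μ := by
    intro g hgc C hC
    have hB : Integrable (fun x : ℝ => C ^ 2 * (1 + 2 * |x| + x ^ 2)) μ :=
      (((integrable_const (1:ℝ)).add (habs.const_mul 2)).add hmom).const_mul _
    refine hB.mono' (hgc.pow 2).aestronglyMeasurable ?_
    filter_upwards with x
    rw [Real.norm_eq_abs, abs_of_nonneg (sq_nonneg (g x))]
    have h1 := hC x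
    have h2 : (g x) ^ 2 = |g x| ^ 2 := (sq_abs _).symm
    have h3 : |x| ^ 2 = x ^ 2 := sq_abs _
    nlinarith [abs_nonneg (g x), abs_nonneg x, mul_self_le_mul_self (abs_nonneg (g x)) h1]
  have hξg : ∀ g : ℝ → ℝ, Continuous g → ∀ C : ℝ, (∀ x, |g x| ≤ C * (1 + |x|)) →
      Integrable (fun x => ξ x * g x) μ := by
    intro g hgc C hC
    have hB : Integrable (fun x => (1/2 : ℝ) * ((ξ x) ^ 2 + (g x) ^ 2)) μ :=
      (hξ.add (hg2 g hgc C hC)).const_mul _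
    refine hB.mono' (hξm.mul hgc.measurable).aestronglyMeasurable ?_
    filter_upwards with x
    rw [Real.norm_eq_abs, abs_mul]
    nlinarith [sq_nonneg (|ξ x| - |g x|), sq_abs (ξ x), sq_abs (g x),
      abs_nonneg (ξ x), abs_nonneg (g x)]
  have hhg : ∀ g : ℝ → ℝ, Continuous g → Integrable g μ →
      Integrable (fun x => sconv μ x * g x) μ := by
    intro g hgc hgi
    refine hgi.abs.mono' (hsconv_sm.measurable.mul hgc.measurable).aestronglyMeasurable ?_
    filter_upwards with x
    rw [Real.norm_eq_abs, abs_mul]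
    calc |sconv μ x| * |g x| ≤ 1 * |g x| :=
          mul_le_mul_of_nonneg_right (hsconv_bd x) (abs_nonneg _)
      _ = |g x| := one_mul _
  -- symmetry of the integrands
  have hsym0 : ∀ p : ℝ × ℝ, (1/2 : ℝ) * |p.2 - p.1| = (1/2) * |p.1 - p.2| := by
    intro p
    rw [show p.2 - p.1 = -(p.1 - p.2) by ring, abs_neg]
  have hsym1 : ∀ g : ℝ → ℝ, ∀ p : ℝ × ℝ,
      (1/2 : ℝ) * |p.2 - p.1 + (g p.2 - g p.1)| = (1/2) * |p.1 - p.2 + (g p.1 - g p.2)| := by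
    intro g p
    rw [show p.2 - p.1 + (g p.2 - g p.1) = -(p.1 - p.2 + (g p.1 - g p.2)) by ring, abs_neg]
  -- the identity ∫ S = ∫ sconv·g
  have eS : ∀ g : ℝ → ℝ, Continuous g → Integrable g μ →
      (∫ p : ℝ × ℝ, (1/2) * (Real.sign (p.1 - p.2) * (g p.1 - g p.2)) ∂(μ.prod μ))
        = ∫ x, sconv μ x * g x ∂μ := by
    intro g hgc hgi
    rw [integral_const_mul, key_sym g hgc hgi]
    ring
  constructor
  · -- forward direction
    intro hae g hgc hCex
    obtain ⟨C, hC⟩ := hCex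
    have hgi := hadm_int g hgc C hC
    have hF1g := hF1 g hgc hgi
    have hSg := hS g hgc hgi
    have e1 : (∫ y, ∫ x, (1/2) * |x - y + (g x - g y)| ∂μ ∂μ)
        = ∫ p : ℝ × ℝ, (1/2) * |p.1 - p.2 + (g p.1 - g p.2)| ∂(μ.prod μ) :=
      iter_eq _ hF1g (hsym1 g)
    have e0 : (∫ y, ∫ x, (1/2) * |x - y| ∂μ ∂μ)
        = ∫ p : ℝ × ℝ, (1/2) * |p.1 - p.2| ∂(μ.prod μ) :=
      iter_eq _ hF0 hsym0
    have eξ : (∫ x, ξ x * g x ∂μ) = ∫ x, sconv μ x * g x ∂μ := by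
      refine integral_congr_ae ?_
      filter_upwards [hae] with x hx
      rw [hx]; rfl
    rw [e1, e0, eξ, ← eS g hgc hgi, ← integral_add hF0 hSg]
    refine integral_mono (hF0.add hSg) hF1g ?_
    intro p
    have := abs_add_sign_mul_le (p.1 - p.2) (g p.1 - g p.2)
    simp only [Pi.add_apply]
    linarith
  · -- reverse direction
    intro H
    have le1 : ∀ g : ℝ → ℝ, Continuous g → ∀ C : ℝ, (∀ x, |g x| ≤ C * (1 + |x|)) →
        (∫ x, ξ x * g x ∂μ) ≤ ∫ x, sconv μ x * g x ∂μ := by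
      intro g hgc C hC
      have hgi := hadm_int g hgc C hC
      have hSg := hS g hgc hgi
      -- step n inequality
      have Hn : ∀ n : ℕ, (∫ x, ξ x * g x ∂μ) ≤
          ∫ p : ℝ × ℝ, (1 / (2 * ((1:ℝ) / (n + 1)))) *
            (|p.1 - p.2 + ((1:ℝ) / (n + 1)) * (g p.1 - g p.2)| - |p.1 - p.2|) ∂(μ.prod μ) := by
        intro n
        set t : ℝ := (1:ℝ) / (n + 1) with ht
        have htpos : 0 < t := by rw [ht]; positivity
        have htne : t ≠ 0 := ne_of_gt htpos
        have ht1 : t ≤ 1 := by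
          rw [ht, div_le_one (by positivity)]
          linarith [Nat.cast_nonneg (α := ℝ) n]
        have hgn_c : Continuous (fun x => t * g x) := continuous_const.mul hgc
        have hgn_b : ∀ x, |t * g x| ≤ C * (1 + |x|) := by
          intro x
          rw [abs_mul, abs_of_pos htpos]
          calc t * |g x| ≤ 1 * |g x| := mul_le_mul_of_nonneg_right ht1 (abs_nonneg _)
            _ = |g x| := one_mul _
            _ ≤ C * (1 + |x|) := hC x
        have hgn_i : Integrable (fun x => t * g x) μ := hgi.const_mul t
        have hF1n : Integrable (fun p : ℝ × ℝ =>
            (1/2) * |p.1 - p.2 + (t * g p.1 - t * g p.2)|) (μ.prod μ) :=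
          hF1 _ hgn_c hgn_i
        have h0 : (∫ y, ∫ x, (1/2) * |x - y + (t * g x - t * g y)| ∂μ ∂μ) ≥
            (∫ y, ∫ x, (1/2) * |x - y| ∂μ ∂μ) + ∫ x, ξ x * (t * g x) ∂μ :=
          H _ hgn_c ⟨C, hgn_b⟩
        have e1 : (∫ y, ∫ x, (1/2) * |x - y + (t * g x - t * g y)| ∂μ ∂μ)
            = ∫ p : ℝ × ℝ, (1/2) * |p.1 - p.2 + (t * g p.1 - t * g p.2)| ∂(μ.prod μ) := by
          refine iter_eq _ hF1n ?_
          intro p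
          exact hsym1 (fun x => t * g x) p
        have e0 : (∫ y, ∫ x, (1/2) * |x - y| ∂μ ∂μ)
            = ∫ p : ℝ × ℝ, (1/2) * |p.1 - p.2| ∂(μ.prod μ) :=
          iter_eq _ hF0 hsym0
        have eξt : (∫ x, ξ x * (t * g x) ∂μ) = t * ∫ x, ξ x * g x ∂μ := by
          rw [← integral_const_mul]
          exact integral_congr_ae (Eventually.of_forall fun x => by ring)
        rw [e1, e0, eξt] at h0
        have hDn_eq : (∫ p : ℝ × ℝ, (1 / (2 * t)) *
              (|p.1 - p.2 + t * (g p.1 - g p.2)| - |p.1 - p.2|) ∂(μ.prod μ))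
            = (1 / t) * ((∫ p : ℝ × ℝ, (1/2) * |p.1 - p.2 + (t * g p.1 - t * g p.2)| ∂(μ.prod μ))
              - ∫ p : ℝ × ℝ, (1/2) * |p.1 - p.2| ∂(μ.prod μ)) := by
          rw [← integral_sub hF1n hF0, ← integral_const_mul]
          refine integral_congr_ae (Eventually.of_forall fun p => ?_)
          show 1 / (2 * t) * (|p.1 - p.2 + t * (g p.1 - g p.2)| - |p.1 - p.2|)
              = 1 / t * (1 / 2 * |p.1 - p.2 + (t * g p.1 - t * g p.2)| - 1 / 2 * |p.1 - p.2|)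
          rw [show p.1 - p.2 + t * (g p.1 - g p.2) = p.1 - p.2 + (t * g p.1 - t * g p.2) by ring]
          ring
        have hstep : t * (∫ x, ξ x * g x ∂μ) ≤
            (∫ p : ℝ × ℝ, (1/2) * |p.1 - p.2 + (t * g p.1 - t * g p.2)| ∂(μ.prod μ))
              - ∫ p : ℝ × ℝ, (1/2) * |p.1 - p.2| ∂(μ.prod μ) := by linarith
        calc (∫ x, ξ x * g x ∂μ) = (1 / t) * (t * ∫ x, ξ x * g x ∂μ) := by field_simp
          _ ≤ (1 / t) * ((∫ p : ℝ × ℝ, (1/2) * |p.1 - p.2 + (t * g p.1 - t * g p.2)| ∂(μ.prod μ))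
              - ∫ p : ℝ × ℝ, (1/2) * |p.1 - p.2| ∂(μ.prod μ)) :=
            mul_le_mul_of_nonneg_left hstep (by positivity)
          _ = _ := hDn_eq.symm
      -- pass to the limit
      have htend : Tendsto (fun n : ℕ => ∫ p : ℝ × ℝ, (1 / (2 * ((1:ℝ) / (n + 1)))) *
            (|p.1 - p.2 + ((1:ℝ) / (n + 1)) * (g p.1 - g p.2)| - |p.1 - p.2|) ∂(μ.prod μ))
          atTop (𝓝 (∫ p : ℝ × ℝ, (1/2) * (Real.sign (p.1 - p.2) * (g p.1 - g p.2))
            ∂(μ.prod μ))) := by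
        refine tendsto_integral_of_dominated_convergence
          (fun p : ℝ × ℝ => |g p.1| + |g p.2|) (fun n => ?_)
          ((hfst _ hgi.abs).add (hsnd _ hgi.abs)) (fun n => ?_) ?_
        · exact (continuous_const.mul
            ((((continuous_fst.sub continuous_snd).add
              (continuous_const.mul ((hgc.comp continuous_fst).sub
                (hgc.comp continuous_snd)))).abs).sub
              (continuous_fst.sub continuous_snd).abs)).aestronglyMeasurable
        · filter_upwards with p
          set t : ℝ := (1:ℝ) / (n + 1) with ht
          have htpos : 0 < t := by rw [ht]; positivity
          rw [Real.norm_eq_abs, abs_mul, abs_of_pos (by positivity : (0:ℝ) < 1 / (2 * t))]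
          have h1 : |(|p.1 - p.2 + t * (g p.1 - g p.2)| - |p.1 - p.2|)| ≤
              |t * (g p.1 - g p.2)| := by
            have := abs_abs_sub_abs_le_abs_sub (p.1 - p.2 + t * (g p.1 - g p.2)) (p.1 - p.2)
            simpa using this
          have h2 : |t * (g p.1 - g p.2)| = t * |g p.1 - g p.2| := by
            rw [abs_mul, abs_of_pos htpos]
          have h3 : |g p.1 - g p.2| ≤ |g p.1| + |g p.2| := abs_sub _ _
          have h4 : (1 / (2 * t)) * |(|p.1 - p.2 + t * (g p.1 - g p.2)| - |p.1 - p.2|)| ≤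
              (1 / (2 * t)) * (t * (|g p.1| + |g p.2|)) := by
            refine mul_le_mul_of_nonneg_left ?_ (by positivity)
            calc |(|p.1 - p.2 + t * (g p.1 - g p.2)| - |p.1 - p.2|)| ≤ t * |g p.1 - g p.2| := by
                  rw [← h2]; exact h1
              _ ≤ t * (|g p.1| + |g p.2|) := mul_le_mul_of_nonneg_left h3 (le_of_lt htpos)
          have h5 : (1 / (2 * t)) * (t * (|g p.1| + |g p.2|)) = (|g p.1| + |g p.2|) / 2 := by
            field_simp
          have h6 : (|g p.1| + |g p.2|) / 2 ≤ |g p.1| + |g p.2| := by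
            have := abs_nonneg (g p.1); have := abs_nonneg (g p.2); linarith
          linarith
        · refine Eventually.of_forall fun p => ?_
          have hab : p.1 - p.2 = 0 → g p.1 - g p.2 = 0 := by
            intro h
            have h' : p.1 = p.2 := by linarith
            rw [h', sub_self]
          exact tendsto_diffquot _ _ hab
      have hle := ge_of_tendsto htend (Eventually.of_forall Hn)
      rw [eS g hgc hgi] at hle
      exact hle
    -- equality for all admissible g
    have eq1 : ∀ g : ℝ → ℝ, Continuous g → (∃ C : ℝ, ∀ x, |g x| ≤ C * (1 + |x|)) →
        (∫ x, ξ x * g x ∂μ) = ∫ x, sconv μ x * g x ∂μ := by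
      rintro g hgc ⟨C, hC⟩
      have h1 := le1 g hgc C hC
      have h2 := le1 (fun x => -g x) hgc.neg C (fun x => by rw [abs_neg]; exact hC x)
      have e1 : (∫ x, ξ x * (-g x) ∂μ) = -∫ x, ξ x * g x ∂μ := by
        rw [← integral_neg]
        exact integral_congr_ae (Eventually.of_forall fun x => by ring)
      have e2 : (∫ x, sconv μ x * (-g x) ∂μ) = -∫ x, sconv μ x * g x ∂μ := by
        rw [← integral_neg]
        exact integral_congr_ae (Eventually.of_forall fun x => by ring)
      rw [e1, e2] at h2
      linarith
    -- conclude via testing against smooth compactly supported functions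
    have key := ae_eq_of_integral_contDiff_smul_eq (f := ξ) (f' := sconv μ)
      hξi.locallyIntegrable hsconv_int.locallyIntegrable ?_
    · filter_upwards [key] with x hx
      exact hx
    · intro g gdiff gsupp
      have hgc := gdiff.continuous
      obtain ⟨C, hCb⟩ := gsupp.exists_bound_of_continuous hgc
      have hC' : ∀ x, |g x| ≤ max C 0 * (1 + |x|) := by
        intro x
        calc |g x| ≤ C := by simpa [Real.norm_eq_abs] using hCb x
          _ ≤ max C 0 := le_max_left _ _
          _ ≤ max C 0 * (1 + |x|) :=
            le_mul_of_one_le_right (le_max_right _ _) (by linarith [abs_nonneg x])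
      have heq := eq1 g hgc ⟨max C 0, hC'⟩
      simp only [smul_eq_mul]
      calc (∫ x, g x * ξ x ∂μ) = ∫ x, ξ x * g x ∂μ :=
            integral_congr_ae (Eventually.of_forall fun x => mul_comm _ _)
        _ = ∫ x, sconv μ x * g x ∂μ := heq
        _ = ∫ x, g x * sconv μ x ∂μ :=
            integral_congr_ae (Eventually.of_forall fun x => mul_comm _ _)

end
end
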